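/- arXiv:2605.27305 — 7 statements merged into one kernel-verified Lean document; each statement's English description precedes it below -/
import Mathlib

section
/- Fix N ≥ 1 and let W(p₁,...,p_N) denote the N×N Wronskian determinant of polynomials p₁,...,p_N in one variable x, with (i,j)-entry the (i−1)-st derivative of p_j. For each ℓ ∈ {0,1,...,N}, the Wronskian of the N divided-power monomials x^m/m! for m ∈ {0,...,N} with m ≠ ℓ (taken in increasing order of m) equals x^{N−ℓ}/(N−ℓ)!. -/
open Polynomial

noncomputable section Aux4

/-- divided power monomial -/
noncomputable def dpw (m : ℕ) : Polynomial ℚ := C ((m.factorial : ℚ))⁻¹ * X ^ m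

lemma iterate_derivative_dpw (i m : ℕ) :
    (⇑derivative)^[i] (dpw m) = if i ≤ m then dpw (m - i) else 0 := by
  rw [dpw, Polynomial.iterate_derivative_C_mul,
    Polynomial.iterate_derivative_X_pow_eq_C_mul]
  split_ifs with h
  · rw [dpw, ← mul_assoc, ← C_mul]
    congr 2
    have h2 := Nat.factorial_mul_descFactorial h
    have h3 : (m.factorial : ℚ) = ((m-i).factorial : ℚ) * (m.descFactorial i : ℚ) := by
      exact_mod_cast h2.symm
    have hne : ((m-i).factorial : ℚ) ≠ 0 := by exact_mod_cast (m-i).factorial_ne_zero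
    have hne2 : (m.descFactorial i : ℚ) ≠ 0 := by
      have : m.descFactorial i ≠ 0 := by
        rw [Ne, Nat.descFactorial_eq_zero_iff_lt]; omega
      exact_mod_cast this
    field_simp [h3]
    rw [h3]; ring
  · rw [Nat.descFactorial_eq_zero_iff_lt.mpr (by omega)]
    simp

/-- scalar entries of the big matrix and its inverse -/
noncomputable def aw (i j : ℕ) : Polynomial ℚ := if i ≤ j then dpw (j - i) else 0
noncomputable def bw (i j : ℕ) : Polynomial ℚ :=
  if i ≤ j then C ((-1 : ℚ) ^ (j - i)) * dpw (j - i) else 0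

lemma dpw_mul_dpw (s t : ℕ) : dpw s * dpw t =
    C ((s.factorial : ℚ)⁻¹ * (t.factorial : ℚ)⁻¹) * X ^ (s + t) := by
  simp [dpw, C_mul]; ring

lemma key_sum (n i j : ℕ) (hj : j ≤ n) :
    ∑ k ∈ Finset.range (n + 1), aw i k * bw k j = if i = j then 1 else 0 := by
  by_cases hij : i ≤ j
  · have hsub : Finset.Icc i j ⊆ Finset.range (n + 1) := by
      intro k hk
      simp only [Finset.mem_Icc] at hk
      simp only [Finset.mem_range]; omega
    rw [← Finset.sum_subset hsub]
    · set d := j - i with hd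
      have hji : j = i + d := by omega
      rw [← Finset.Ico_add_one_right_eq_Icc, Finset.sum_Ico_eq_sum_range]
      have hrange : j + 1 - i = d + 1 := by omega
      rw [hrange]
      have hterm : ∀ t ∈ Finset.range (d + 1),
          aw i (i + t) * bw (i + t) j =
          C ((-1 : ℚ) ^ (d - t) * ((t.factorial : ℚ)⁻¹ * ((d - t).factorial : ℚ)⁻¹)) * X ^ d := by
        intro t ht
        simp only [Finset.mem_range] at ht
        have h1 : i ≤ i + t := by omega
        have h2 : i + t ≤ j := by omega
        rw [aw, bw, if_pos h1, if_pos h2]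
        have e1 : i + t - i = t := by omega
        have e2 : j - (i + t) = d - t := by omega
        rw [e1, e2]
        rw [mul_left_comm, dpw_mul_dpw]
        have e3 : t + (d - t) = d := by omega
        rw [e3, ← mul_assoc, ← C_mul]
      rw [Finset.sum_congr rfl hterm, ← Finset.sum_mul, ← map_sum]
      have hscal : ∑ t ∈ Finset.range (d + 1),
          (-1 : ℚ) ^ (d - t) * ((t.factorial : ℚ)⁻¹ * ((d - t).factorial : ℚ)⁻¹)
          = (0 : ℚ) ^ d * ((d.factorial : ℚ))⁻¹ := by
        have hpow : ((1 : ℚ) + (-1)) ^ d = ∑ t ∈ Finset.range (d + 1),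
            (1:ℚ) ^ t * (-1) ^ (d - t) * d.choose t := add_pow 1 (-1) d
        have h0 : ((0:ℚ)) ^ d = ∑ t ∈ Finset.range (d + 1),
            (-1 : ℚ) ^ (d - t) * d.choose t := by
          simpa using hpow
        rw [Finset.sum_congr rfl (fun t ht => ?_), ← Finset.sum_mul, ← h0]
        simp only [Finset.mem_range] at ht
        have ht' : t ≤ d := by omega
        have hc := Nat.choose_mul_factorial_mul_factorial ht'
        have hc' : (d.choose t : ℚ) * t.factorial * (d - t).factorial = d.factorial := by
          exact_mod_cast hc
        have hne1 : (t.factorial : ℚ) ≠ 0 := by exact_mod_cast t.factorial_ne_zero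
        have hne2 : ((d - t).factorial : ℚ) ≠ 0 := by exact_mod_cast (d-t).factorial_ne_zero
        have hne3 : ((d).factorial : ℚ) ≠ 0 := by exact_mod_cast d.factorial_ne_zero
        field_simp
        linear_combination (-1:ℚ) * hc'
      rw [hscal]
      rcases Nat.eq_zero_or_pos d with hd0 | hd0
      · have : i = j := by omega
        simp [this, hd0]
      · have : i ≠ j := by omega
        simp [this, zero_pow (show d ≠ 0 by omega)]
    · intro k hk hk2
      simp only [Finset.mem_Icc, not_and_or, not_le] at hk2
      rcases hk2 with h | h
      · rw [aw, if_neg (by omega)]; simp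
      · rw [bw, if_neg (by omega)]; simp
  · have : ∀ k ∈ Finset.range (n+1), aw i k * bw k j = 0 := by
      intro k _
      by_cases h1 : i ≤ k
      · rw [bw, if_neg (by omega)]; simp
      · rw [aw, if_neg h1]; simp
    rw [Finset.sum_eq_zero this, if_neg (by omega)]

/-- the big (N+1)×(N+1) matrix -/
noncomputable def Aw (n : ℕ) : Matrix (Fin (n+1)) (Fin (n+1)) (Polynomial ℚ) :=
  Matrix.of fun i j => aw i j

noncomputable def Bw (n : ℕ) : Matrix (Fin (n+1)) (Fin (n+1)) (Polynomial ℚ) :=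
  Matrix.of fun i j => bw i j

lemma Aw_mul_Bw (n : ℕ) : Aw n * Bw n = 1 := by
  refine Matrix.ext fun i j => ?_
  rw [Matrix.mul_apply]
  simp only [Aw, Bw, Matrix.of_apply]
  rw [show (∑ k : Fin (n+1), aw (i:ℕ) (k:ℕ) * bw (k:ℕ) (j:ℕ))
      = ∑ k ∈ Finset.range (n+1), aw (i:ℕ) k * bw k (j:ℕ) from
    Fin.sum_univ_eq_sum_range (fun k => aw (i:ℕ) k * bw k (j:ℕ)) (n+1)]
  rw [key_sum n i j (by omega)]
  by_cases h : i = j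
  · simp [h, Matrix.one_apply]
  · rw [if_neg (fun hh => h (Fin.ext hh)), Matrix.one_apply_ne h]

lemma det_Aw (n : ℕ) : (Aw n).det = 1 := by
  rw [Matrix.det_of_upperTriangular]
  · have : ∀ i : Fin (n+1), Aw n i i = 1 := by
      intro i
      simp [Aw, aw, dpw]
    simp [this]
  · intro i j hij
    simp only [Aw, Matrix.of_apply, aw]
    rw [if_neg (by exact fun h => absurd (Fin.le_def.mpr h) (not_le.mpr hij))]

lemma adjugate_Aw (n : ℕ) : (Aw n).adjugate = Bw n := by
  have h1 : (Aw n).adjugate * (Aw n * Bw n) = (Aw n).adjugate := by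
    rw [Aw_mul_Bw, mul_one]
  calc (Aw n).adjugate = (Aw n).adjugate * Aw n * Bw n := by rw [mul_assoc, h1]
    _ = Bw n := by rw [Matrix.adjugate_mul, det_Aw, one_smul, one_mul]

end Aux4

noncomputable def wronskN (N : ℕ) (p : Fin N → Polynomial ℚ) : Polynomial ℚ :=
  Matrix.det (Matrix.of fun i j : Fin N => (⇑derivative)^[(i : ℕ)] (p j))

/-- For `N ≥ 1` and `ℓ ∈ {0,…,N}`, the Wronskian of the `N`
divided-power monomials `x^m/m!`, `m ∈ {0,…,N} \ {ℓ}` (in increasing order of `m`),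
equals `x^{N−ℓ}/(N−ℓ)!`. -/
theorem stmt4 (N : ℕ) (hN : 1 ≤ N) (ℓ : ℕ) (hℓ : ℓ ≤ N) :
    wronskN N (fun j =>
      C (((if (j : ℕ) < ℓ then (j : ℕ) else (j : ℕ) + 1).factorial : ℚ))⁻¹ *
        X ^ (if (j : ℕ) < ℓ then (j : ℕ) else (j : ℕ) + 1))
    = C (((N - ℓ).factorial : ℚ))⁻¹ * X ^ (N - ℓ) := by
  obtain ⟨n, rfl⟩ : ∃ n, N = n + 1 := ⟨N - 1, by omega⟩
  set ℓ' : Fin (n + 1 + 1) := ⟨ℓ, by omega⟩ with hℓ'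
  have hmat : (Matrix.of fun i j : Fin (n+1) => (⇑derivative)^[(i : ℕ)]
      ((fun j : Fin (n+1) =>
        C (((if (j : ℕ) < ℓ then (j : ℕ) else (j : ℕ) + 1).factorial : ℚ))⁻¹ *
        X ^ (if (j : ℕ) < ℓ then (j : ℕ) else (j : ℕ) + 1)) j))
      = (Aw (n+1)).submatrix (Fin.last (n+1)).succAbove ℓ'.succAbove := by
    ext i j
    have hcoe : ((ℓ'.succAbove j : Fin (n+1+1)) : ℕ)
        = if (j : ℕ) < ℓ then (j : ℕ) else (j : ℕ) + 1 := by
      rw [Fin.succAbove]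
      split_ifs with h1 h2 h2
      · simp
      · exact absurd (Fin.lt_def.mp h1) (by simpa using h2)
      · exact absurd (Fin.lt_def.mpr (by simpa using h2)) h1
      · simp
    simp only [Matrix.of_apply, Matrix.submatrix_apply, Aw, Fin.succAbove_last,
      Fin.coe_castSucc, hcoe, aw]
    set m := if (j : ℕ) < ℓ then (j : ℕ) else (j : ℕ) + 1 with hm
    have : C ((m.factorial : ℚ))⁻¹ * X ^ m = dpw m := rfl
    rw [this, iterate_derivative_dpw]
  rw [wronskN, hmat]
  have hadj := adjugate_Aw (n+1)
  have := Matrix.adjugate_fin_succ_eq_det_submatrix (Aw (n+1)) ℓ' (Fin.last (n+1))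
  rw [hadj] at this
  have hB : Bw (n+1) ℓ' (Fin.last (n+1)) = C ((-1 : ℚ) ^ (n + 1 - ℓ)) * dpw (n + 1 - ℓ) := by
    simp only [Bw, Matrix.of_apply, bw]
    rw [if_pos]
    · norm_num [hℓ']
    · simp [Fin.le_def]; omega
  rw [hB] at this
  -- this : C (..) * dpw (n+1-ℓ) = (-1)^(last + ℓ') * det (submatrix ...)
  have hsign : ((-1 : Polynomial ℚ)) ^ ((Fin.last (n+1) : ℕ) + (ℓ' : ℕ)) *
      (C ((-1 : ℚ) ^ (n + 1 - ℓ)) * dpw (n + 1 - ℓ)) = dpw (n + 1 - ℓ) := by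
    rw [← mul_assoc]
    have : ((-1 : Polynomial ℚ)) ^ ((Fin.last (n+1) : ℕ) + (ℓ' : ℕ)) * C ((-1 : ℚ) ^ (n + 1 - ℓ))
        = 1 := by
      rw [show (C ((-1 : ℚ) ^ (n + 1 - ℓ)) : Polynomial ℚ) = (-1 : Polynomial ℚ) ^ (n+1-ℓ) by
        simp [map_pow], ← pow_add]
      have : (Fin.last (n+1) : ℕ) + (ℓ' : ℕ) + (n + 1 - ℓ) = 2 * (n + 1) := by
        simp [hℓ']; omega
      rw [this, pow_mul]
      norm_num
    rw [this, one_mul]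
  have hdet : ((Aw (n+1)).submatrix (Fin.last (n+1)).succAbove ℓ'.succAbove).det
      = dpw (n + 1 - ℓ) := by
    have := congrArg (fun p => ((-1 : Polynomial ℚ)) ^ ((Fin.last (n+1) : ℕ) + (ℓ' : ℕ)) * p) this
    rw [hsign, ← mul_assoc, ← pow_add] at this
    have h2 : ((-1 : Polynomial ℚ)) ^ (((Fin.last (n+1) : ℕ) + (ℓ' : ℕ)) +
        ((Fin.last (n+1) : ℕ) + (ℓ' : ℕ))) = 1 := by
      rw [← two_mul, pow_mul]; norm_num
    rw [h2, one_mul] at this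
    exact this.symm
  rw [hdet, dpw]
end

section
/- Over ℝ² with the ternary Wronskian bracket [f,g,h] = det of the matrix with rows (f,g,h), (f_x,g_x,h_x), (f_y,g_y,h_y), the four-dimensional span A = ⟨1, x, y, xy⟩ is closed under the bracket, with the commutation relations [1,x,y] = 1, [1,x,xy] = x, [1,y,xy] = −y, [x,y,xy] = −xy on the basis elements; in particular every bracket of three basis elements lies in A. -/
/-!
The bracket is the generalised Wronskian `det (D i (v j))` of the operators `(1, ∂ₓ, ∂_y)`,
an alternating trilinear map. By multilinearity and alternation, its values on the span of
`e = (1, x, y, xy)` lie in a submodule as soon as its values on the four increasing triples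
`e ∘ Fin.succAbove k` do, and these are the four commutation relations, computed directly.
-/

open MvPolynomial

/-- The ternary Wronskian bracket `W_{d=2}^{k=1} = 1 ∧ ∂_x ∧ ∂_y`. -/
noncomputable def wronsk3 (f g h : MvPolynomial (Fin 2) ℝ) : MvPolynomial (Fin 2) ℝ :=
  Matrix.det !![f, g, h;
    pderiv 0 f, pderiv 0 g, pderiv 0 h;
    pderiv 1 f, pderiv 1 g, pderiv 1 h]

namespace MultilinearMap

variable {R M N ι : Type*} [Semiring R] [AddCommMonoid M] [Module R M] [AddCommMonoid N]
  [Module R N] [Fintype ι] [DecidableEq ι]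

theorem map_mem_of_forall_mem_span (f : MultilinearMap R (fun _ : ι ↦ M) N) {s : Set M}
    {P : Submodule R N} (hf : ∀ v : ι → M, (∀ i, v i ∈ s) → f v ∈ P) {v : ι → M}
    (hv : ∀ i, v i ∈ Submodule.span R s) : f v ∈ P := by
  suffices key : ∀ t : Finset ι, ∀ v : ι → M,
      (∀ i ∈ t, v i ∈ Submodule.span R s) → (∀ i ∉ t, v i ∈ s) → f v ∈ P from
    key Finset.univ v (fun i _ ↦ hv i) (by simp)
  intro t
  induction t using Finset.induction_on with
  | empty => exact fun v _ hvs ↦ hf v fun i ↦ hvs i (Finset.notMem_empty i)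
  | insert a t ha ih =>
    intro v hv hvs
    have hupdate : ∀ x ∈ Submodule.span R s, f (Function.update v a x) ∈ P := by
      intro x hx
      induction hx using Submodule.span_induction with
      | mem x hx =>
        refine ih _ (fun i hi ↦ ?_) (fun i hi ↦ ?_)
        · rw [Function.update_of_ne (ne_of_mem_of_not_mem hi ha)]
          exact hv i (Finset.mem_insert_of_mem hi)
        · rcases eq_or_ne i a with rfl | hia
          · simpa using hx
          · rw [Function.update_of_ne hia]
            exact hvs i (by simp [hia, hi])
      | zero => simp
      | add x y _ _ hx hy => simpa [f.map_update_add] using P.add_mem hx hy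
      | smul c x _ hx => simpa [f.map_update_smul] using P.smul_mem c hx
    simpa using hupdate (v a) (hv a (Finset.mem_insert_self a t))

end MultilinearMap

namespace AlternatingMap

variable {R M N ι : Type*} [Ring R] [AddCommGroup M] [Module R M] [AddCommGroup N]
  [Module R N] [LinearOrder ι] {n : ℕ}

theorem map_comp_mem_of_strictMono (f : M [⋀^Fin n]→ₗ[R] N) (e : ι → M) {P : Submodule R N}
    (hf : ∀ σ : Fin n → ι, StrictMono σ → f (e ∘ σ) ∈ P) (σ : Fin n → ι) : f (e ∘ σ) ∈ P := by
  by_cases hσ : Function.Injective σ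
  · have hsorted : StrictMono (σ ∘ Tuple.sort σ) :=
      (Tuple.monotone_sort σ).strictMono_of_injective (hσ.comp (Equiv.injective _))
    have hperm := f.map_perm (e ∘ σ ∘ Tuple.sort σ) (Tuple.sort σ)⁻¹
    have hunsort : e ∘ σ ∘ Tuple.sort σ ∘ ⇑(Tuple.sort σ)⁻¹ = e ∘ σ := by ext; simp
    rw [Function.comp_assoc, Function.comp_assoc, hunsort] at hperm
    rw [hperm]
    exact P.smul_of_tower_mem _ (hf _ hsorted)
  · obtain ⟨i, j, hij, hne⟩ : ∃ i j, σ i = σ j ∧ i ≠ j := by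
      simpa [Function.Injective, and_comm] using hσ
    rw [f.map_eq_zero_of_eq (e ∘ σ) (congrArg e hij) hne]
    exact P.zero_mem

theorem map_mem_of_forall_mem_span_range (f : M [⋀^Fin n]→ₗ[R] N) (e : ι → M)
    {P : Submodule R N} (hf : ∀ σ : Fin n → ι, StrictMono σ → f (e ∘ σ) ∈ P) {v : Fin n → M}
    (hv : ∀ i, v i ∈ Submodule.span R (Set.range e)) : f v ∈ P :=
  f.toMultilinearMap.map_mem_of_forall_mem_span (fun v hv ↦ by
    choose σ hσ using hv
    obtain rfl : e ∘ σ = v := funext hσ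
    exact f.map_comp_mem_of_strictMono e hf σ) hv

end AlternatingMap

theorem Fin.exists_succAbove_eq_of_strictMono {n : ℕ} {σ : Fin n → Fin (n + 1)}
    (hσ : StrictMono σ) : ∃ k : Fin (n + 1), k.succAbove = σ := by
  obtain ⟨k, hk⟩ : ∃ k, k ∉ Set.range σ := by
    by_contra! hsurj
    have := Fintype.card_le_of_surjective σ fun k ↦ hsurj k
    simp at this
  refine ⟨k, (Fin.strictMono_succAbove k).range_inj hσ |>.mp ?_⟩
  have hsub : Set.range σ ⊆ Set.range k.succAbove := by
    rw [Fin.range_succAbove]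
    rintro _ hx rfl
    exact hk hx
  refine (Set.eq_of_subset_of_ncard_le hsub ?_ (Set.toFinite _)).symm
  rw [Set.ncard_range_of_injective hσ.injective,
    Set.ncard_range_of_injective Fin.succAbove_right_injective]

section

variable {R A ι : Type*} [CommRing R] [CommRing A] [Algebra R A] [Fintype ι] [DecidableEq ι]

noncomputable def generalizedWronskian (D : ι → A →ₗ[R] A) : A [⋀^ι]→ₗ[R] A where
  toMultilinearMap :=
    (Matrix.detRowAlternating.toMultilinearMap.restrictScalars R).compLinearMap
      fun _ ↦ LinearMap.pi D
  map_eq_zero_of_eq' v i j h hij := Matrix.detRowAlternating.map_eq_zero_of_eq _ (by simp [h]) hij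

theorem generalizedWronskian_apply (D : ι → A →ₗ[R] A) (v : ι → A) :
    generalizedWronskian D v = (Matrix.of fun i j ↦ D i (v j)).det := by
  rw [← Matrix.det_transpose]
  rfl

end

/-- `W_d^{k=1} = 1 ∧ ∂₁ ∧ ⋯ ∧ ∂_d` on polynomials in `d` variables. -/
noncomputable def completeWronskian (R : Type*) [CommRing R] (d : ℕ) :
    MvPolynomial (Fin d) R [⋀^Fin (d + 1)]→ₗ[R] MvPolynomial (Fin d) R :=
  generalizedWronskian (Fin.cons LinearMap.id fun i ↦ (pderiv i).toLinearMap)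

theorem wronsk3_eq_completeWronskian (v : Fin 3 → MvPolynomial (Fin 2) ℝ) :
    wronsk3 (v 0) (v 1) (v 2) = completeWronskian ℝ 2 v := by
  rw [completeWronskian, generalizedWronskian_apply, wronsk3]
  congr 1
  ext i j
  fin_cases i <;> fin_cases j <;> rfl

theorem wronsk3_one_x_y : wronsk3 1 (X 0) (X 1) = 1 := by
  simp [wronsk3, Matrix.det_fin_three]

theorem wronsk3_one_x_xy : wronsk3 1 (X 0) (X 0 * X 1) = X 0 := by
  simp [wronsk3, Matrix.det_fin_three, pderiv_X]

theorem wronsk3_one_y_xy : wronsk3 1 (X 1) (X 0 * X 1) = -X 1 := by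
  simp [wronsk3, Matrix.det_fin_three, pderiv_X]

theorem wronsk3_x_y_xy : wronsk3 (X 0) (X 1) (X 0 * X 1) = -(X 0 * X 1) := by
  simp [wronsk3, Matrix.det_fin_three, pderiv_X]
  ring

theorem completeWronskian_comp_succAbove_mem_span (k : Fin 4) :
    completeWronskian ℝ 2 (![1, X 0, X 1, X 0 * X 1] ∘ k.succAbove) ∈
      Submodule.span ℝ (Set.range ![1, X 0, X 1, X 0 * X 1]) := by
  rw [← wronsk3_eq_completeWronskian]
  fin_cases k
  · change wronsk3 (X 0) (X 1) (X 0 * X 1) ∈ _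
    rw [wronsk3_x_y_xy]
    exact neg_mem (Submodule.subset_span ⟨3, rfl⟩)
  · change wronsk3 1 (X 1) (X 0 * X 1) ∈ _
    rw [wronsk3_one_y_xy]
    exact neg_mem (Submodule.subset_span ⟨2, rfl⟩)
  · change wronsk3 1 (X 0) (X 0 * X 1) ∈ _
    rw [wronsk3_one_x_xy]
    exact Submodule.subset_span ⟨1, rfl⟩
  · change wronsk3 1 (X 0) (X 1) ∈ _
    rw [wronsk3_one_x_y]
    exact Submodule.subset_span ⟨0, rfl⟩

/-- The span `A = ⟨1, x, y, xy⟩` is closed under the ternary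
Wronskian bracket, with `[1,x,y] = 1`, `[1,x,xy] = x`, `[1,y,xy] = −y`,
`[x,y,xy] = −xy`. -/
theorem stmt7 :
    (∀ f g h : MvPolynomial (Fin 2) ℝ,
      f ∈ Submodule.span ℝ ({1, X 0, X 1, X 0 * X 1} : Set (MvPolynomial (Fin 2) ℝ)) →
      g ∈ Submodule.span ℝ ({1, X 0, X 1, X 0 * X 1} : Set (MvPolynomial (Fin 2) ℝ)) →
      h ∈ Submodule.span ℝ ({1, X 0, X 1, X 0 * X 1} : Set (MvPolynomial (Fin 2) ℝ)) →
      wronsk3 f g h ∈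
        Submodule.span ℝ ({1, X 0, X 1, X 0 * X 1} : Set (MvPolynomial (Fin 2) ℝ)))
    ∧ wronsk3 1 (X 0) (X 1) = 1
    ∧ wronsk3 1 (X 0) (X 0 * X 1) = X 0
    ∧ wronsk3 1 (X 1) (X 0 * X 1) = -(X 1)
    ∧ wronsk3 (X 0) (X 1) (X 0 * X 1) = -(X 0 * X 1) := by
  refine ⟨fun f g h hf hg hh ↦ ?_, wronsk3_one_x_y, wronsk3_one_x_xy, wronsk3_one_y_xy,
    wronsk3_x_y_xy⟩
  have hbasis : ({1, X 0, X 1, X 0 * X 1} : Set (MvPolynomial (Fin 2) ℝ)) =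
      Set.range ![1, X 0, X 1, X 0 * X 1] := by
    ext p
    simp only [Set.mem_insert_iff, Set.mem_singleton_iff, Set.mem_range, Fin.exists_fin_succ]
    simp [eq_comm]
  rw [hbasis] at hf hg hh ⊢
  change wronsk3 (![f, g, h] 0) (![f, g, h] 1) (![f, g, h] 2) ∈ _
  rw [wronsk3_eq_completeWronskian]
  refine (completeWronskian ℝ 2).map_mem_of_forall_mem_span_range
    ![1, X 0, X 1, X 0 * X 1] (fun σ hσ ↦ ?_) ?_
  · obtain ⟨k, rfl⟩ := Fin.exists_succAbove_eq_of_strictMono hσ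
    exact completeWronskian_comp_succAbove_mem_span k
  · intro i
    fin_cases i <;> assumption
end

section
/- Let d ≥ 1, k ≥ 1, N = C(d+k,d). The quasi-triangular matrix Δ_d^k evaluated at the standard multi-indices r₁,...,r_N themselves (ordered by total degree) is upper triangular with diagonal entries r_j! = ∏_i r_j^i!, and hence det Δ_d^k(r₁,...,r_N) = ∏_{j=1}^N r_j!; consequently the generalised Vandermonde determinant of the standard multi-indices equals ∏_{j=1}^N ∏_{i=1}^d (r_j^i)!. -/
open Finset Polynomial Matrix

lemma dp_eval_prod (x : ℚ) (n : ℕ) :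
    (descPochhammer ℚ n).eval x = ∏ ℓ ∈ range n, (x - ℓ) := by
  induction n with
  | zero => simp
  | succ n ih =>
    rw [descPochhammer_succ_right, eval_mul, ih, prod_range_succ]
    simp

lemma dp_eval_self (n : ℕ) :
    (descPochhammer ℚ n).eval (n : ℚ) = n.factorial := by
  rw [descPochhammer_eval_eq_descFactorial, Nat.descFactorial_self]


/-- Let `d ≥ 1`, `k ≥ 1`, `N = C(d+k,d)`, and let `r : Fin N → ℕ^d`
enumerate all multi-indices of total degree ≤ k ordered by increasing total degree.
The quasi-triangular matrix `Δ_d^k` evaluated at the standard multi-indices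
themselves (with `(j,n)`-entry the product of falling factorials
`∏_i ∏_{ℓ<r_j^i} (r_n^i − ℓ)`) has determinant `∏_j r_j! = ∏_j ∏_i (r_j^i)!`;
consequently the generalised Vandermonde determinant of the standard multi-indices
equals `∏_j ∏_i (r_j^i)!` as well. -/
theorem stmt11 (d k : ℕ) (hd : 1 ≤ d) (hk : 1 ≤ k)
    (N : ℕ) (hN : N = Nat.choose (d + k) d)
    (r : Fin N → Fin d → ℕ) (hinj : Function.Injective r)
    (hcomp : ∀ v : Fin d → ℕ, (∑ i, v i) ≤ k ↔ ∃ j, r j = v)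
    (hmono : ∀ j j' : Fin N, j ≤ j' → (∑ i, r j i) ≤ (∑ i, r j' i)) :
    Matrix.det (Matrix.of fun j n : Fin N =>
        ∏ i, ∏ ℓ ∈ Finset.range (r j i), ((r n i : ℚ) - (ℓ : ℚ)))
      = ∏ j : Fin N, ∏ i : Fin d, ((r j i).factorial : ℚ)
    ∧ Matrix.det (Matrix.of fun j n : Fin N => ∏ i, ((r n i : ℚ)) ^ (r j i))
      = ∏ j : Fin N, ∏ i : Fin d, ((r j i).factorial : ℚ) := by
  -- basic facts
  have hsum : ∀ j, (∑ i, r j i) ≤ k := fun j => (hcomp (r j)).mpr ⟨j, rfl⟩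
  have hcomponent : ∀ j i, r j i ≤ k := fun j i =>
    le_trans (Finset.single_le_sum (f := r j) (fun _ _ => Nat.zero_le _) (mem_univ i)) (hsum j)
  -- componentwise ≤ plus index order forces equality / comparison
  have hlt : ∀ {j n : Fin N}, (∀ i, r j i ≤ r n i) → n ≤ j → j = n := by
    intro j n hle hnj
    apply hinj
    have h1 : (∑ i, r j i) ≤ ∑ i, r n i := Finset.sum_le_sum fun i _ => hle i
    have h2 := hmono n j hnj
    have : (∑ i, r j i) = ∑ i, r n i := le_antisymm h1 h2
    funext i
    by_contra hne
    have : (∑ i, r j i) < ∑ i, r n i :=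
      Finset.sum_lt_sum (fun i _ => hle i) ⟨i, mem_univ i, lt_of_le_of_ne (hle i) hne⟩
    omega
  -- the Δ matrix, rewritten via descPochhammer
  set Δ : Matrix (Fin N) (Fin N) ℚ := Matrix.of fun j n : Fin N =>
        ∏ i, ∏ ℓ ∈ Finset.range (r j i), ((r n i : ℚ) - (ℓ : ℚ)) with hΔ
  have hΔeval : ∀ j n, Δ j n = ∏ i, (descPochhammer ℚ (r j i)).eval (r n i : ℚ) := by
    intro j n
    simp only [hΔ, of_apply]
    exact Finset.prod_congr rfl fun i _ => (dp_eval_prod _ _).symm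
  -- Δ is upper triangular
  have hΔtri : Δ.BlockTriangular id := by
    intro j n hjn
    simp only [id] at hjn
    rw [hΔeval]
    -- since n < j, some coordinate has r n i < r j i
    have : ¬ ∀ i, r j i ≤ r n i := by
      intro hle
      exact absurd (hlt hle hjn.le) (fun h => lt_irrefl _ (h ▸ hjn))
    push_neg at this
    obtain ⟨i, hi⟩ := this
    apply Finset.prod_eq_zero (mem_univ i)
    rw [dp_eval_prod]
    apply Finset.prod_eq_zero (Finset.mem_range.mpr hi)
    simp
  have hΔdiag : ∀ j, Δ j j = ∏ i, ((r j i).factorial : ℚ) := by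
    intro j
    rw [hΔeval]
    exact Finset.prod_congr rfl fun i _ => dp_eval_self _
  have hdetΔ : Δ.det = ∏ j : Fin N, ∏ i : Fin d, ((r j i).factorial : ℚ) := by
    rw [Matrix.det_of_upperTriangular hΔtri]
    exact Finset.prod_congr rfl fun j _ => hΔdiag j
  refine ⟨hdetΔ, ?_⟩
  -- now the Vandermonde part
  set V : Matrix (Fin N) (Fin N) ℚ :=
    Matrix.of fun j n : Fin N => ∏ i, ((r n i : ℚ)) ^ (r j i) with hV
  set C : Matrix (Fin N) (Fin N) ℚ :=
    Matrix.of fun j j' : Fin N => ∏ i, (descPochhammer ℚ (r j i)).coeff (r j' i) with hC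
  -- C is lower triangular with 1's on the diagonal
  have hCzero : ∀ {j j' : Fin N}, (¬ ∀ i, r j' i ≤ r j i) → C j j' = 0 := by
    intro j j' h
    push_neg at h
    obtain ⟨i, hi⟩ := h
    apply Finset.prod_eq_zero (mem_univ i)
    apply Polynomial.coeff_eq_zero_of_natDegree_lt
    rwa [descPochhammer_natDegree]
  have hCtri : C.BlockTriangular OrderDual.toDual := by
    intro j j' hjj'
    simp only [OrderDual.toDual_lt_toDual] at hjj'
    apply hCzero
    intro hle
    exact absurd (hlt hle hjj'.le) (fun h => lt_irrefl _ (h ▸ hjj'))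
  have hCdiag : ∀ j, C j j = 1 := by
    intro j
    simp only [hC, of_apply]
    apply Finset.prod_eq_one
    intro i _
    have := (monic_descPochhammer ℚ (r j i)).coeff_natDegree
    rwa [descPochhammer_natDegree] at this
  have hdetC : C.det = 1 := by
    rw [Matrix.det_of_lowerTriangular C hCtri]
    simp [hCdiag]
  -- Δ = C * V
  have hΔCV : Δ = C * V := by
    ext j n
    rw [hΔeval, Matrix.mul_apply]
    -- expand each eval as a sum of coefficients
    have heval : ∀ i, (descPochhammer ℚ (r j i)).eval (r n i : ℚ)
        = ∑ m ∈ range (k + 1), (descPochhammer ℚ (r j i)).coeff m * (r n i : ℚ) ^ m := by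
      intro i
      rw [Polynomial.eval_eq_sum_range' (lt_of_le_of_lt (by
        rw [descPochhammer_natDegree]; exact hcomponent j i) (Nat.lt_succ_self k))]
    simp_rw [heval]
    rw [Finset.prod_univ_sum]
    -- now sum over m : Fin d → ℕ in piFinset (range (k+1))
    have himg : ∀ m ∈ Fintype.piFinset (fun _ : Fin d => range (k + 1)),
        m ∉ Finset.image r Finset.univ →
        (∏ i, (descPochhammer ℚ (r j i)).coeff (m i) * (r n i : ℚ) ^ (m i)) = 0 := by
      intro m _ hm
      by_cases hle : ∀ i, m i ≤ r j i
      · exfalso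
        have : (∑ i, m i) ≤ k := le_trans (Finset.sum_le_sum fun i _ => hle i) (hsum j)
        obtain ⟨j', hj'⟩ := (hcomp m).mp this
        exact hm (Finset.mem_image.mpr ⟨j', mem_univ j', hj'⟩)
      · push_neg at hle
        obtain ⟨i, hi⟩ := hle
        apply Finset.prod_eq_zero (mem_univ i)
        rw [Polynomial.coeff_eq_zero_of_natDegree_lt (by rwa [descPochhammer_natDegree]),
          zero_mul]
    have hsub : Finset.image r Finset.univ ⊆ Fintype.piFinset (fun _ : Fin d => range (k + 1)) := by
      intro m hm
      obtain ⟨j', _, rfl⟩ := Finset.mem_image.mp hm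
      exact Fintype.mem_piFinset.mpr fun i => Finset.mem_range.mpr
        (Nat.lt_succ_of_le (hcomponent j' i))
    rw [← Finset.sum_subset hsub himg, Finset.sum_image (fun a _ b _ h => hinj h)]
    simp only [hC, hV, of_apply, Finset.prod_mul_distrib]
  rw [← one_mul V.det, ← hdetC, ← Matrix.det_mul, ← hΔCV, hdetΔ]
end

section
/- Let d ≥ 1, k ≥ 1, N = C(d+k,d), and let k₁,...,k_N ∈ ℕ^d be multi-indices. Let Van be the N×N matrix with (j,n)-entry ∏_i (k_n^i)^{r_j^i} and Δ the N×N matrix with (j,n)-entry ∏_i ∏_{ℓ=0}^{r_j^i−1}(k_n^i − ℓ), where r₁,...,r_N enumerate all multi-indices of total degree ≤ k. Then det Van = det Δ. -/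
open Polynomial Finset Matrix

noncomputable def ffpoly (m : ℕ) : Polynomial ℚ :=
  ∏ ℓ ∈ Finset.range m, (Polynomial.X - Polynomial.C (ℓ : ℚ))

lemma ffpoly_monic (m : ℕ) : (ffpoly m).Monic :=
  monic_prod_of_monic _ _ fun ℓ _ => monic_X_sub_C _

lemma ffpoly_natDegree (m : ℕ) : (ffpoly m).natDegree = m := by
  rw [ffpoly, natDegree_prod_of_monic _ _ fun ℓ _ => monic_X_sub_C _]
  simp only [natDegree_X_sub_C]
  simp

lemma ffpoly_eval (m : ℕ) (x : ℚ) :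
    (ffpoly m).eval x = ∏ ℓ ∈ Finset.range m, (x - ℓ) := by
  simp [ffpoly, eval_prod]

/-- **det Van = det Δ.** Let `d ≥ 1`, `k ≥ 1`, `N = C(d+k,d)`, let
`r : Fin N → ℕ^d` enumerate all multi-indices of total degree ≤ k, and let
`k₁,…,k_N ∈ ℕ^d`.  The Vandermonde matrix with `(j,n)`-entry `∏_i (k_n^i)^{r_j^i}`
and the quasi-triangular matrix with `(j,n)`-entry `∏_i ∏_{ℓ<r_j^i}(k_n^i − ℓ)`
have equal determinants. -/
theorem stmt12 (d k : ℕ) (hd : 1 ≤ d) (hk : 1 ≤ k)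
    (N : ℕ) (hN : N = Nat.choose (d + k) d)
    (r : Fin N → Fin d → ℕ) (hinj : Function.Injective r)
    (hcomp : ∀ v : Fin d → ℕ, (∑ i, v i) ≤ k ↔ ∃ j, r j = v)
    (kk : Fin N → Fin d → ℕ) :
    Matrix.det (Matrix.of fun j n : Fin N => ∏ i, ((kk n i : ℚ)) ^ (r j i))
      = Matrix.det (Matrix.of fun j n : Fin N =>
          ∏ i, ∏ ℓ ∈ Finset.range (r j i), ((kk n i : ℚ) - (ℓ : ℚ))) := by
  classical
  have hsum : ∀ j, ∑ i, r j i ≤ k := fun j => (hcomp (r j)).mpr ⟨j, rfl⟩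
  set C : Matrix (Fin N) (Fin N) ℚ := Matrix.of fun j j' =>
    if ∀ i, r j' i ≤ r j i then ∏ i, (ffpoly (r j i)).coeff (r j' i) else 0 with hC
  -- Δ = C * Van
  have key : (Matrix.of fun j n : Fin N =>
          ∏ i, ∏ ℓ ∈ Finset.range (r j i), ((kk n i : ℚ) - (ℓ : ℚ)))
      = C * (Matrix.of fun j n : Fin N => ∏ i, ((kk n i : ℚ)) ^ (r j i)) := by
    ext j n
    rw [Matrix.mul_apply]
    have expand : ∀ i : Fin d, ∏ ℓ ∈ Finset.range (r j i), ((kk n i : ℚ) - ℓ)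
        = ∑ s ∈ Finset.range (r j i + 1), (ffpoly (r j i)).coeff s * (kk n i : ℚ) ^ s := by
      intro i
      rw [← ffpoly_eval, Polynomial.eval_eq_sum_range, ffpoly_natDegree]
    simp only [Matrix.of_apply]
    rw [Finset.prod_congr rfl (fun i _ => expand i), Finset.prod_univ_sum]
    rw [← Finset.sum_filter_add_sum_filter_not Finset.univ
      (fun j' => ∀ i, r j' i ≤ r j i)]
    have h2 : ∑ j' ∈ Finset.univ.filter (fun j' => ¬ ∀ i, r j' i ≤ r j i),
        C j j' * ∏ i, ((kk n i : ℚ)) ^ (r j' i) = 0 := by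
      apply Finset.sum_eq_zero
      intro j' hj'
      simp only [Finset.mem_filter] at hj'
      simp [hC, hj'.2]
    rw [h2, add_zero]
    refine (Finset.sum_bij (fun j' _ => r j') ?_ ?_ ?_ ?_).symm
    · intro j' hj'
      simp only [Finset.mem_filter] at hj'
      simp only [Fintype.mem_piFinset, Finset.mem_range]
      intro i; exact Nat.lt_succ_of_le (hj'.2 i)
    · intro a ha b hb h; exact hinj h
    · intro s hs
      simp only [Fintype.mem_piFinset, Finset.mem_range] at hs
      have hle : ∀ i, s i ≤ r j i := fun i => Nat.lt_succ_iff.mp (hs i)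
      have : ∑ i, s i ≤ k := le_trans (Finset.sum_le_sum fun i _ => hle i) (hsum j)
      obtain ⟨j', hj'⟩ := (hcomp s).mp this
      refine ⟨j', ?_, hj'⟩
      simp only [Finset.mem_filter, Finset.mem_univ, true_and]
      intro i; rw [hj']; exact hle i
    · intro j' hj'
      simp only [Finset.mem_filter] at hj'
      simp [hC, hj'.2, Finset.prod_mul_distrib]
  rw [key, Matrix.det_mul]
  -- det C = 1
  have hdetC : C.det = 1 := by
    rw [← Matrix.det_transpose]
    have hbt : Cᵀ.BlockTriangular (fun j => ∑ i, r j i) := by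
      intro a b hab
      simp only [Matrix.transpose_apply, hC, Matrix.of_apply]
      rw [if_neg]
      intro hle
      exact absurd (Finset.sum_le_sum fun i _ => hle i) (not_le.mpr hab)
    rw [hbt.det]
    apply Finset.prod_eq_one
    intro a _
    have : Cᵀ.toSquareBlock (fun j => ∑ i, r j i) a = 1 := by
      ext ⟨j, hj⟩ ⟨j', hj'⟩
      simp only [Matrix.toSquareBlock_def, Matrix.transpose_apply, hC, Matrix.of_apply]
      by_cases h : j = j'
      · subst h
        rw [if_pos (fun i => le_refl _), Matrix.one_apply_eq]
        exact Finset.prod_eq_one fun i _ => by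
          have h1 := (ffpoly_monic (r j i)).coeff_natDegree
          rwa [ffpoly_natDegree] at h1
      · rw [Matrix.one_apply_ne (fun hc => h (Subtype.ext_iff.mp hc)), if_neg]
        intro hle
        have heq : ∀ i, r j i = r j' i := by
          by_contra hne
          push_neg at hne
          obtain ⟨i, hi⟩ := hne
          have : ∑ i, r j i < ∑ i, r j' i :=
            Finset.sum_lt_sum (fun i _ => hle i) ⟨i, Finset.mem_univ i, lt_of_le_of_ne (hle i) hi⟩
          omega
        exact h (hinj (funext heq))
    rw [this, Matrix.det_one]
  rw [hdetC, one_mul]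
end

section
/- Let d ≥ 1, k ≥ 1, N = C(d+k,d), and let k₁,...,k_N ∈ ℕ^d be multi-indices. Then the complete generalised Wronskian determinant of the monomials x^{k₁},...,x^{k_N} equals det Van_d^k(k₁,...,k_N) times the monomial x^{K − (kN/(d+1))·(1,...,1)}, where K = k₁ + ⋯ + k_N (componentwise sum); in particular the Wronskian of monomials is again a (scalar multiple of a) monomial. -/
/-!
Differentiating gives `∂^r x^m = (m)_r x^(m - r)` with the falling factorial
`(m)_r = ∏ᵢ mᵢ (mᵢ - 1) ⋯ (mᵢ - rᵢ + 1)`, and `(m)_r = 0` unless `r ≤ m`. Hence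
every term of the Leibniz expansion of the Wronskian is a multiple of the same monomial
`x^(K - ∑ⱼ rⱼ)`, and the Wronskian is `det ((kₙ)_{rⱼ}) · x^(K - ∑ⱼ rⱼ)`.

Since `(m)_r = m^r + (lower powers of m)` and the rows are indexed by a lower set, the falling
factorial matrix is a unitriangular transform of the Vandermonde matrix, so the two determinants
agree.

Adding the slack coordinate `k - |r|` identifies the multi-indices of degree `≤ k` with the
`(d + 1)`-tuples of sum `k`, a set symmetric in all `d + 1` coordinates; so every coordinate of
`∑ⱼ rⱼ` is `kN / (d + 1)`.
-/

open MvPolynomial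

/-- Iterated partial derivative `∂^{|r|}/∂x^r` along a multi-index `r : Fin d → ℕ`. -/
noncomputable def wDeriv (d : ℕ) (r : Fin d → ℕ)
    (p : MvPolynomial (Fin d) ℚ) : MvPolynomial (Fin d) ℚ :=
  (List.finRange d).foldl (fun q i => (⇑(pderiv i))^[r i] q) p

section LowerSet

open Finset

theorem Finset.Nat.mul_sum_apply_antidiagonalTuple (k n : ℕ) (i : Fin k) :
    k * ∑ x ∈ Nat.antidiagonalTuple k n, x i = n * #(Nat.antidiagonalTuple k n) := by
  set A := Nat.antidiagonalTuple k n
  have hsymm (a b : Fin k) : ∑ x ∈ A, x a = ∑ x ∈ A, x b := by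
    refine Finset.sum_nbij' (· ∘ Equiv.swap a b) (· ∘ Equiv.swap a b) ?_ ?_ ?_ ?_ ?_ <;>
      simp [A, Nat.mem_antidiagonalTuple, Function.comp_def, Equiv.sum_comp (Equiv.swap a b)]
  calc k * ∑ x ∈ A, x i = ∑ a : Fin k, ∑ x ∈ A, x a := by simp [hsymm _ i]
    _ = ∑ x ∈ A, ∑ a, x a := Finset.sum_comm
    _ = ∑ x ∈ A, n := Finset.sum_congr rfl fun x hx => Nat.mem_antidiagonalTuple.mp hx
    _ = n * #A := by rw [sum_const, smul_eq_mul, mul_comm]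

theorem image_cons_eq_antidiagonalTuple {ι : Type*} [Fintype ι] {d k : ℕ}
    (r : ι → Fin d → ℕ) (hr : ∀ v : Fin d → ℕ, (∑ i, v i) ≤ k ↔ ∃ j, r j = v) :
    univ.image (fun j => (Fin.cons (k - ∑ i, r j i) (r j) : Fin (d + 1) → ℕ))
      = Nat.antidiagonalTuple (d + 1) k := by
  ext x
  simp only [mem_image, mem_univ, true_and, Nat.mem_antidiagonalTuple, Fin.sum_univ_succ]
  constructor
  · rintro ⟨j, rfl⟩
    have := (hr (r j)).mpr ⟨j, rfl⟩
    simp only [Fin.cons_zero, Fin.cons_succ]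
    omega
  · intro hx
    obtain ⟨j, hj⟩ := (hr (Fin.tail x)).mp (by simp only [Fin.tail]; omega)
    refine ⟨j, ?_⟩
    rw [hj, ← Fin.cons_self_tail x]
    simp only [Fin.tail, Fin.cons_succ] at hx ⊢
    congr 1
    omega

theorem mul_sum_apply_of_enumerates {ι : Type*} [Fintype ι] {d k : ℕ}
    (r : ι → Fin d → ℕ) (hinj : Function.Injective r)
    (hr : ∀ v : Fin d → ℕ, (∑ i, v i) ≤ k ↔ ∃ j, r j = v) (i : Fin d) :
    (d + 1) * ∑ j, r j i = k * Fintype.card ι := by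
  classical
  set e : ι → Fin (d + 1) → ℕ := fun j => Fin.cons (k - ∑ i, r j i) (r j)
  have he : Function.Injective e := fun a b h => hinj (Fin.cons_injective2 h).2
  have himage := image_cons_eq_antidiagonalTuple r hr
  calc (d + 1) * ∑ j, r j i = (d + 1) * ∑ x ∈ univ.image e, x i.succ := by
        rw [sum_image fun a _ b _ h => he h]; simp [e]
    _ = k * Fintype.card ι := by
        rw [himage, Nat.mul_sum_apply_antidiagonalTuple, ← himage,
          card_image_of_injective _ he, card_univ]

end LowerSet

section Vandermonde

open Finset Matrix

theorem Matrix.det_eq_one_of_unitriangular {R n α : Type*} [CommRing R] [Fintype n]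
    [DecidableEq n] [PartialOrder α] (L : Matrix n n R) (s : n → α) (hs : Function.Injective s)
    (hdiag : ∀ j, L j j = 1) (htri : ∀ j j', L j j' ≠ 0 → s j' ≤ s j) : L.det = 1 := by
  let _ : LinearOrder n :=
    LinearOrder.lift' (toLinearExtension ∘ s) fun a b h => hs h
  have hlow : L.IsLowerTriangular := fun j j' hlt => by
    by_contra hne
    exact (not_le_of_gt hlt) (toLinearExtension.monotone (htri j j' hne))
  convert det_of_isLowerTriangular L hlow
  simp [hdiag]

theorem Matrix.det_prod_eval_eq_det_prod_pow {R ι n : Type*} [CommRing R] [Fintype ι]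
    [Fintype n] [DecidableEq n] (p : ℕ → Polynomial R) (hmonic : ∀ t, (p t).Monic)
    (hdeg : ∀ t, (p t).natDegree = t) (s : n → ι → ℕ) (hs : Function.Injective s)
    (hlower : ∀ j q, q ≤ s j → ∃ j', s j' = q) (x : n → ι → R) :
    det (of fun j c => ∏ i, (p (s j i)).eval (x c i))
      = det (of fun j c => ∏ i, x c i ^ s j i) := by
  classical
  set L : Matrix n n R := of fun j j' => ∏ i, (p (s j i)).coeff (s j' i)
  have hL : L.det = 1 := by
    refine det_eq_one_of_unitriangular L s hs (fun j => ?_) (fun j j' hne i => ?_)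
    · simp only [L, of_apply]
      exact prod_eq_one fun i _ => by simpa [hdeg] using (hmonic (s j i)).coeff_natDegree
    · refine le_of_not_gt fun hlt => hne ?_
      exact prod_eq_zero (mem_univ i) (Polynomial.coeff_eq_zero_of_natDegree_lt (by rwa [hdeg]))
  suffices hfac : of (fun j c => ∏ i, (p (s j i)).eval (x c i))
      = L * of (fun j c => ∏ i, x c i ^ s j i) by
    rw [hfac, det_mul, hL, one_mul]
  ext j c
  set g : (ι → ℕ) → R := fun q => ∏ i, (p (s j i)).coeff (q i) * x c i ^ q i
  have hbox : Fintype.piFinset (fun i => range (s j i + 1)) ⊆ univ.image s := fun q hq => by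
    obtain ⟨j', rfl⟩ := hlower j q fun i =>
      Nat.lt_succ_iff.mp (by simpa using Fintype.mem_piFinset.mp hq i)
    exact mem_image_of_mem s (mem_univ j')
  have hout (q) (_ : q ∈ univ.image s) (hq : q ∉ Fintype.piFinset fun i => range (s j i + 1)) :
      g q = 0 := by
    obtain ⟨i, hi⟩ : ∃ i, s j i < q i := by simpa [Nat.lt_succ_iff] using hq
    exact prod_eq_zero (mem_univ i)
      (by rw [Polynomial.coeff_eq_zero_of_natDegree_lt (by rwa [hdeg]), zero_mul])
  calc ∏ i, (p (s j i)).eval (x c i)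
      = ∏ i, ∑ t ∈ range (s j i + 1), (p (s j i)).coeff t * x c i ^ t := by
        simp_rw [Polynomial.eval_eq_sum_range, hdeg]
    _ = ∑ q ∈ Fintype.piFinset (fun i => range (s j i + 1)), g q := prod_univ_sum _ _
    _ = ∑ q ∈ univ.image s, g q := sum_subset hbox hout
    _ = ∑ j', g (s j') := sum_image fun a _ b _ h => hs h
    _ = (L * of (fun j c => ∏ i, x c i ^ s j i)) j c := by
        simp [L, g, mul_apply, prod_mul_distrib]

end Vandermonde

section Monomial

open Finset Matrix

theorem MvPolynomial.iterate_pderiv_monomial {R σ : Type*} [CommSemiring R] (i : σ) (t : ℕ)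
    (s : σ →₀ ℕ) (a : R) :
    (pderiv i)^[t] (monomial s a)
      = monomial (s - Finsupp.single i t) (a * (s i).descFactorial t) := by
  induction t with
  | zero => simp
  | succ t ih =>
    rw [Function.iterate_succ_apply', ih, pderiv_monomial, Finsupp.tsub_apply,
      Finsupp.single_eq_same, tsub_tsub, ← Finsupp.single_add, Nat.descFactorial_succ]
    push_cast
    ring_nf

theorem MvPolynomial.foldl_iterate_pderiv_monomial {R σ : Type*} [CommSemiring R]
    (r : σ → ℕ) (l : List σ) (hl : l.Nodup) (s : σ →₀ ℕ) (a : R) :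
    l.foldl (fun q i => (pderiv i)^[r i] q) (monomial s a)
      = monomial (s - (l.map fun i => Finsupp.single i (r i)).sum)
          (a * (l.map fun i => ((s i).descFactorial (r i) : R)).prod) := by
  induction l generalizing s a with
  | nil => simp
  | cons i l ih =>
    obtain ⟨hi, hl⟩ := List.nodup_cons.mp hl
    have hrest : l.map (fun i' => (((s - Finsupp.single i (r i)) i').descFactorial (r i') : R))
        = l.map fun i' => ((s i').descFactorial (r i') : R) :=
      List.map_congr_left fun i' hi' => by
        rw [Finsupp.tsub_apply, Finsupp.single_eq_of_ne (ne_of_mem_of_not_mem hi' hi), tsub_zero]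
    rw [List.foldl_cons, iterate_pderiv_monomial, ih hl, hrest, tsub_tsub]
    simp [mul_assoc]

theorem wDeriv_monomial {d : ℕ} (r : Fin d → ℕ) (s : Fin d →₀ ℕ) (a : ℚ) :
    wDeriv d r (monomial s a)
      = monomial (s - Finsupp.equivFunOnFinite.symm r)
          (a * ∏ i, ((s i).descFactorial (r i) : ℚ)) := by
  rw [wDeriv, foldl_iterate_pderiv_monomial r _ (List.nodup_finRange d),
    ← Fin.sum_univ_def, ← Fin.prod_univ_def, Finsupp.equivFunOnFinite_symm_eq_sum]

theorem MvPolynomial.prod_X_pow_eq_monomial_equivFunOnFinite {R σ : Type*} [CommSemiring R]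
    [Fintype σ] (m : σ → ℕ) :
    ∏ i, (X i ^ m i : MvPolynomial σ R) = monomial (Finsupp.equivFunOnFinite.symm m) 1 := by
  simp [X_pow_eq_monomial, Finsupp.equivFunOnFinite_symm_eq_sum, ← monomial_sum_prod]

theorem MvPolynomial.det_monomial_tsub {R σ n : Type*} [CommRing R] [Fintype n] [DecidableEq n]
    (u v : n → σ →₀ ℕ) (c : n → n → R) (hc : ∀ j m, c j m ≠ 0 → v j ≤ u m) :
    det (of fun j m => monomial (u m - v j) (c j m))
      = monomial (∑ m, u m - ∑ j, v j) (of c).det := by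
  rw [det_apply', det_apply', map_sum]
  refine sum_congr rfl fun π _ => ?_
  simp only [of_apply]
  rw [← monomial_sum_prod, ← C_mul_monomial, map_intCast]
  congr 1
  by_cases h0 : ∏ m, c (π m) m = 0
  · rw [h0, monomial_zero, monomial_zero]
  · have hle : ∀ m ∈ univ, v (π m) ≤ u m := fun m _ =>
      hc _ _ fun h => h0 (prod_eq_zero (mem_univ m) h)
    rw [sum_tsub_distrib _ hle, Equiv.sum_comp π v]

end Monomial

theorem stmt13_general (d k : ℕ) (N : ℕ)
    (r : Fin N → Fin d → ℕ) (hinj : Function.Injective r)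
    (hcomp : ∀ v : Fin d → ℕ, (∑ i, v i) ≤ k ↔ ∃ j, r j = v)
    (kk : Fin N → Fin d → ℕ)
    (S : ℕ) (hS : S * (d + 1) = k * N) :
    Matrix.det (Matrix.of fun j n : Fin N =>
        wDeriv d (r j) (∏ i, X i ^ kk n i))
      = C (Matrix.det (Matrix.of fun j n : Fin N => ∏ i, ((kk n i : ℚ)) ^ (r j i))) *
        ∏ i : Fin d, X i ^ ((∑ n, kk n i) - S) := by
  have hcoord (i : Fin d) : ∑ j, r j i = S := by
    have := mul_sum_apply_of_enumerates r hinj hcomp i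
    rw [Fintype.card_fin] at this
    exact Nat.eq_of_mul_eq_mul_left d.succ_pos (by linarith)
  have hlower (j : Fin N) (q : Fin d → ℕ) (hq : q ≤ r j) : ∃ j', r j' = q :=
    (hcomp q).mp ((Finset.sum_le_sum fun i _ => hq i).trans ((hcomp (r j)).mpr ⟨j, rfl⟩))
  have hvand := Matrix.det_prod_eval_eq_det_prod_pow (descPochhammer ℚ)
    (fun t => monic_descPochhammer ℚ t) (fun t => descPochhammer_natDegree ℚ t) r hinj hlower
    fun n i => (kk n i : ℚ)
  simp only [descPochhammer_eval_eq_descFactorial] at hvand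
  simp only [prod_X_pow_eq_monomial_equivFunOnFinite, wDeriv_monomial, one_mul, C_mul_monomial,
    mul_one, Finsupp.coe_equivFunOnFinite_symm]
  rw [det_monomial_tsub (fun n => Finsupp.equivFunOnFinite.symm (kk n))
    (fun j => Finsupp.equivFunOnFinite.symm (r j))
    (fun j n => ∏ i, ((kk n i).descFactorial (r j i) : ℚ)) ?_, hvand]
  · congr 2
    ext i
    simp [hcoord]
  · intro j n hne i
    refine le_of_not_gt fun hlt => hne (Finset.prod_eq_zero (Finset.mem_univ i) ?_)
    exact_mod_cast Nat.descFactorial_eq_zero_iff_lt.mpr hlt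

/-- Let `d ≥ 1`, `k ≥ 1`, `N = C(d+k,d)`, `r : Fin N → ℕ^d` an
enumeration of all multi-indices of total degree ≤ k, and `k₁,…,k_N ∈ ℕ^d`.  Let
`S = kN/(d+1)` be the per-coordinate degree shift (so `S(d+1) = kN`) and suppose each
shifted exponent is nonnegative: `S ≤ ∑_n k_n^i` for all `i`.  Then the complete
generalised Wronskian of the monomials `x^{k₁},…,x^{k_N}` equals the generalised
Vandermonde determinant `det(∏_i (k_n^i)^{r_j^i})` times the monomial
`x^{K − S·(1,…,1)}` where `K = k₁ + ⋯ + k_N`. -/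
theorem stmt13 (d k : ℕ) (hd : 1 ≤ d) (hk : 1 ≤ k)
    (N : ℕ) (hN : N = Nat.choose (d + k) d)
    (r : Fin N → Fin d → ℕ) (hinj : Function.Injective r)
    (hcomp : ∀ v : Fin d → ℕ, (∑ i, v i) ≤ k ↔ ∃ j, r j = v)
    (kk : Fin N → Fin d → ℕ)
    (S : ℕ) (hS : S * (d + 1) = k * N)
    (hpos : ∀ i : Fin d, S ≤ ∑ n, kk n i) :
    Matrix.det (Matrix.of fun j n : Fin N =>
        wDeriv d (r j) (∏ i, X i ^ kk n i))
      = C (Matrix.det (Matrix.of fun j n : Fin N => ∏ i, ((kk n i : ℚ)) ^ (r j i))) *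
        ∏ i : Fin d, X i ^ ((∑ n, kk n i) - S) :=
  stmt13_general d k N r hinj hcomp kk S hS
end

section
/- Fix d ≥ 1, k ≥ 1, N = C(d+k,d). Let j ∈ {1,...,N} with standard multi-index r_j of total degree r_j = |r_j| ≤ k, and let a(x) = x^n be a monomial with multi-index n ∈ ℕ^d. Then W_d^k(x^{r₁}/r₁!, ..., a(x) in position j, ..., x^{r_N}/r_N!) = ((−1)^{k−|r_j|}/(k−|r_j|)!) · ∏_{i=1}^d ∏_{ℓ=0}^{r_j^i−1}(n_i − ℓ) · ∏_{ℓ=|r_j|+1}^{k}(deg a − ℓ) · x^{n − r_j}, where deg a = n₁+⋯+n_d, and the coefficient is zero whenever x^{r_j} does not divide a(x). -/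
open MvPolynomial Finset

namespace Stmt16Aux



lemma iter_pderiv_monomial {d : ℕ} (i : Fin d) (t : ℕ) (s : Fin d →₀ ℕ) (c : ℚ) :
    (⇑(pderiv i))^[t] (monomial s c) =
      monomial (s - Finsupp.single i t) (c * ((s i).descFactorial t : ℚ)) := by
  induction t with
  | zero => simp
  | succ t ih =>
      rw [Function.iterate_succ_apply', ih, pderiv_monomial]
      congr 1
      · rw [tsub_tsub, ← Finsupp.single_add]
      · rw [Finsupp.tsub_apply, Finsupp.single_eq_same, Nat.descFactorial_succ]
        push_cast
        ring

lemma foldl_wderiv {d : ℕ} (r : Fin d → ℕ) :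
    ∀ (L : List (Fin d)), L.Nodup → ∀ (s : Fin d →₀ ℕ) (c : ℚ),
    L.foldl (fun q i => (⇑(pderiv i))^[r i] q) (monomial s c) =
      monomial (s - (L.map fun i => Finsupp.single i (r i)).sum)
        (c * (L.map fun i => ((s i).descFactorial (r i) : ℚ)).prod) := by
  intro L
  induction L with
  | nil => intro _ s c; simp
  | cons a L ih =>
    intro hL s c
    have ha : a ∉ L := (List.nodup_cons.mp hL).1
    rw [List.foldl_cons, iter_pderiv_monomial, ih (List.nodup_cons.mp hL).2]
    have hcoef : ∀ i ∈ L, ((s - Finsupp.single a (r a)) i) = s i := by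
      intro i hi
      rw [Finsupp.tsub_apply, Finsupp.single_apply,
        if_neg (fun (h : a = i) => ha (by rwa [h])), tsub_zero]
    congr 1
    · rw [tsub_tsub, List.map_cons, List.sum_cons]
    · rw [List.map_congr_left (fun i hi => by rw [hcoef i hi])]
      rw [List.map_cons, List.prod_cons]
      ring



lemma coe_eqv {d : ℕ} (e : Fin d → ℕ) : ⇑(Finsupp.equivFunOnFinite.symm e) = e :=
  Finsupp.equivFunOnFinite.apply_symm_apply e

lemma wDeriv_monomial {d : ℕ} (r : Fin d → ℕ) (s : Fin d →₀ ℕ) (c : ℚ) :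
    wDeriv d r (monomial s c) = monomial (s - ∑ i, Finsupp.single i (r i))
      (c * ∏ i, ((s i).descFactorial (r i) : ℚ)) := by
  rw [wDeriv, foldl_wderiv r _ (List.nodup_finRange d), Fin.sum_univ_def, Fin.prod_univ_def]

lemma prod_X_pow {d : ℕ} (e : Fin d → ℕ) :
    (∏ i, (X i : MvPolynomial (Fin d) ℚ) ^ e i) =
      monomial (Finsupp.equivFunOnFinite.symm e) 1 := by
  rw [monomial_eq, C_1, one_mul,
    Finsupp.prod_fintype _ _ (fun i => pow_zero _)]
  exact Finset.prod_congr rfl fun i _ => by rw [coe_eqv]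

lemma wDeriv_form {d : ℕ} (rr e : Fin d → ℕ) (c : ℚ) :
    wDeriv d rr (C c * ∏ i, X i ^ e i) =
      C (c * ∏ i, ((e i).descFactorial (rr i) : ℚ)) * ∏ i, X i ^ (e i - rr i) := by
  rw [prod_X_pow, C_mul_monomial, mul_one, wDeriv_monomial,
    prod_X_pow (fun i => e i - rr i), C_mul_monomial, mul_one]
  have hexp : Finsupp.equivFunOnFinite.symm e - ∑ i, Finsupp.single i (rr i)
      = Finsupp.equivFunOnFinite.symm (fun i => e i - rr i) := by
    ext i
    have h1 : ∑ i' : Fin d, (Finsupp.single i' (rr i')) i = rr i := by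
      rw [Finset.sum_eq_single i (fun b _ hb => by
        rw [Finsupp.single_apply, if_neg hb]) (by simp)]
      simp
    rw [Finsupp.tsub_apply, Finsupp.finset_sum_apply, h1, coe_eqv, coe_eqv]
  have hdF : ∀ i : Fin d, (Finsupp.equivFunOnFinite.symm e) i = e i := fun i => by
    rw [coe_eqv]
  rw [hexp]
  simp only [coe_eqv]

lemma castDF (n : ℕ) : ∀ t : ℕ, (Nat.descFactorial n t : ℚ) = ∏ i ∈ range t, ((n : ℚ) - i)
  | 0 => by simp
  | (t+1) => by
      rw [Nat.descFactorial_succ, prod_range_succ, ← castDF n t]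
      rcases le_or_gt t n with h | h
      · push_cast [h]; ring
      · rw [Nat.descFactorial_eq_zero_iff_lt.mpr h]
        simp

lemma descFactorial_add' (n a : ℕ) : ∀ b : ℕ,
    Nat.descFactorial n (a + b) = Nat.descFactorial n a * Nat.descFactorial (n - a) b
  | 0 => by simp
  | (b+1) => by
      rw [← Nat.add_assoc, Nat.descFactorial_succ, descFactorial_add' n a b,
        Nat.descFactorial_succ, Nat.sub_sub]
      ring

lemma inv_fact_dF (a b : ℕ) (h : a ≤ b) :
    ((b.factorial : ℚ))⁻¹ * (b.descFactorial a : ℚ) = (((b - a).factorial : ℚ))⁻¹ := by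
  have h1 : ((b - a).factorial : ℚ) * (b.descFactorial a : ℚ) = (b.factorial : ℚ) := by
    exact_mod_cast congrArg (Nat.cast : ℕ → ℚ) (Nat.factorial_mul_descFactorial h)
  field_simp
  linarith [h1]

lemma qalt (c : ℕ) :
    ∑ t ∈ range (c + 1), ((-1 : ℚ)) ^ t * (c.choose t : ℚ) = if c = 0 then 1 else 0 := by
  have h := Int.alternating_sum_range_choose (n := c)
  have h2 : ((∑ m ∈ range (c + 1), ((-1) ^ m * c.choose m : ℤ) : ℤ) : ℚ)
      = ((if c = 0 then 1 else 0 : ℤ) : ℚ) := by rw [h]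
  push_cast at h2
  rw [h2]

lemma altBinom (c : ℕ) :
    ∑ t ∈ range (c + 1), ((-1 : ℚ)) ^ (c - t) * ((t.factorial : ℚ) * (((c - t).factorial : ℚ)))⁻¹
      = if c = 0 then 1 else 0 := by
  have key : ∀ t ∈ range (c + 1),
      ((-1 : ℚ)) ^ (c - t) * ((t.factorial : ℚ) * (((c - t).factorial : ℚ)))⁻¹
        = ((-1 : ℚ)) ^ c * (((-1 : ℚ)) ^ t * (c.choose t : ℚ)) * ((c.factorial : ℚ))⁻¹ := by
    intro t ht
    have htc : t ≤ c := Nat.lt_succ_iff.mp (mem_range.mp ht)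
    have hsgn : ((-1 : ℚ)) ^ (c - t) * ((-1 : ℚ)) ^ t = ((-1 : ℚ)) ^ c := by
      rw [← pow_add, Nat.sub_add_cancel htc]
    have hch : (c.choose t : ℚ) = (c.factorial : ℚ) / ((t.factorial : ℚ) * ((c - t).factorial : ℚ)) :=
      Nat.cast_choose ℚ htc
    have hsgn' : ((-1 : ℚ)) ^ (c - t) = (-1 : ℚ) ^ c * (-1 : ℚ) ^ t := by
      rw [← hsgn, mul_assoc, ← pow_add, Even.neg_one_pow ⟨t, rfl⟩, mul_one]
    have h1 : (t.factorial : ℚ) ≠ 0 := by positivity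
    have h2 : ((c - t).factorial : ℚ) ≠ 0 := by positivity
    have h3 : (c.factorial : ℚ) ≠ 0 := by positivity
    rw [hch, hsgn']
    field_simp
  rw [Finset.sum_congr rfl key, ← Finset.sum_mul, ← Finset.mul_sum, qalt]
  have h3 : (c.factorial : ℚ) ≠ 0 := by positivity
  split_ifs with h
  · subst h; simp
  · simp

lemma altsum (M : ℕ) : ∀ K : ℕ,
    ∑ t ∈ range (K + 1), ((-1 : ℚ)) ^ t * (M.choose t : ℚ)
      = ((-1 : ℚ)) ^ K / (K.factorial : ℚ) * ∏ i ∈ range K, ((M : ℚ) - 1 - i)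
  | 0 => by simp
  | (K+1) => by
      rw [Finset.sum_range_succ, altsum M K]
      have hch : (M.choose (K + 1) : ℚ)
          = (∏ i ∈ range (K + 1), ((M : ℚ) - i)) / ((K + 1).factorial : ℚ) := by
        have h0 : ((M.descFactorial (K + 1) : ℕ) : ℚ) = ∏ i ∈ range (K + 1), ((M : ℚ) - i) :=
          castDF M (K + 1)
        have h1 : M.descFactorial (K + 1) = (K + 1).factorial * M.choose (K + 1) :=
          Nat.descFactorial_eq_factorial_mul_choose _ _
        rw [h1] at h0
        push_cast at h0
        have hne : (((K + 1).factorial : ℚ)) ≠ 0 := by positivity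
        field_simp
        push_cast
        linarith [h0]
      rw [hch]
      have h1 : ∏ i ∈ range (K + 1), ((M : ℚ) - i)
          = (M : ℚ) * ∏ i ∈ range K, ((M : ℚ) - 1 - i) := by
        rw [Finset.prod_range_succ']
        simp only [Nat.cast_add, Nat.cast_one]
        rw [Nat.cast_zero, sub_zero, mul_comm]
        congr 1
        exact Finset.prod_congr rfl fun i _ => by push_cast; ring
      have h2 : ∏ i ∈ range (K + 1), ((M : ℚ) - 1 - i)
          = (∏ i ∈ range K, ((M : ℚ) - 1 - i)) * ((M : ℚ) - 1 - K) :=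
        Finset.prod_range_succ _ _
      rw [h1, h2]
      have hK : (K.factorial : ℚ) ≠ 0 := by positivity
      have hK1 : ((K + 1).factorial : ℚ) ≠ 0 := by positivity
      have hfac : ((K + 1).factorial : ℚ) = (K + 1) * (K.factorial : ℚ) := by
        push_cast [Nat.factorial_succ]; ring
      rw [hfac]
      field_simp
      ring

lemma multiVdm {ι : Type*} [DecidableEq ι] (s : Finset ι) (m : ι → ℕ) :
    ∀ t : ℕ, ∑ f ∈ s.piAntidiag t, ∏ i ∈ s, (m i).choose (f i) = (∑ i ∈ s, m i).choose t := by
  induction s using Finset.cons_induction with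
  | empty =>
      intro t
      rw [Finset.piAntidiag_empty]
      cases t with
      | zero => simp
      | succ t => simp
  | cons i s hi ih =>
      intro t
      rw [Finset.piAntidiag_cons hi, Finset.sum_disjiUnion, Finset.sum_cons, Nat.add_choose_eq]
      refine Finset.sum_congr rfl ?_
      rintro ⟨a, b⟩ hab
      rw [Finset.sum_map]
      have hterm : ∀ g ∈ s.piAntidiag b,
          ∏ i' ∈ Finset.cons i s hi,
            (m i').choose ((addRightEmbedding fun t => if t = i then a else 0) g i')
          = (m i).choose a * ∏ i' ∈ s, (m i').choose (g i') := by
        intro g hg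
        have hg' := (Finset.mem_piAntidiag.mp hg).2
        have hgi : g i = 0 := by
          by_contra hne
          exact hi (hg' i hne)
        rw [Finset.prod_cons]
        simp only [addRightEmbedding_apply, Pi.add_apply, if_true]
        rw [hgi, zero_add]
        congr 1
        refine Finset.prod_congr rfl fun i' hi' => ?_
        rw [if_neg (fun (h : i' = i) => hi (h ▸ hi')), add_zero]
      rw [Finset.sum_congr rfl hterm, ← Finset.mul_sum, ih b]


lemma keyBC {d k : ℕ} (u w : Fin d → ℕ) (hw : ∀ i, w i ≤ k) (hwk : ∑ i, w i ≤ k) :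
    (∑ v ∈ (Fintype.piFinset fun _ : Fin d => Finset.range (k+1)).filter
        (fun v => ∑ i, v i ≤ k),
      if (∀ i, u i ≤ v i) ∧ (∀ i, v i ≤ w i) then
        (-1 : ℚ) ^ (∑ i, (w i - v i)) * (∏ i, (((v i - u i).factorial : ℚ))⁻¹) *
          (∏ i, (((w i - v i).factorial : ℚ))⁻¹)
      else 0)
    = if u = w then 1 else 0 := by
  classical
  by_cases hc : ∀ i, u i ≤ w i
  · rw [← Finset.sum_filter_of_ne
      (p := fun v => (∀ i, u i ≤ v i) ∧ (∀ i, v i ≤ w i))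
      (fun v _ hne => by by_contra h; rw [if_neg h] at hne; exact hne rfl)]
    trans (∑ s ∈ Fintype.piFinset (fun i : Fin d => range ((w i - u i) + 1)),
      ∏ i, ((-1 : ℚ) ^ ((w i - u i) - s i) *
        (((s i).factorial : ℚ) * ((((w i - u i) - s i).factorial : ℚ)))⁻¹))
    · refine Finset.sum_nbij' (fun v i => v i - u i) (fun s i => u i + s i)
        ?_ ?_ ?_ ?_ ?_
      · intro v hv
        rw [Finset.mem_filter, Finset.mem_filter] at hv
        obtain ⟨-, h1, h2⟩ := hv
        show (fun i => v i - u i) ∈ _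
        rw [Fintype.mem_piFinset]
        intro i
        rw [Finset.mem_range]
        have := h1 i; have := h2 i
        omega
      · intro s hs
        simp only [Fintype.mem_piFinset, Finset.mem_range] at hs
        show (fun i => u i + s i) ∈ _
        simp only [Finset.mem_filter, Fintype.mem_piFinset, Finset.mem_range]
        have hsi : ∀ i, s i ≤ w i - u i := fun i => Nat.lt_succ_iff.mp (hs i)
        have hsum : ∑ i, (u i + s i) ≤ ∑ i, w i := by
          apply Finset.sum_le_sum
          intro i _
          have := hsi i; have := hc i
          omega
        refine ⟨⟨fun i => ?_, le_trans hsum hwk⟩, fun i => Nat.le_add_right _ _,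
          fun i => ?_⟩
        · have h3 : u i + s i ≤ w i := by have := hsi i; have := hc i; omega
          have := hw i
          omega
        · have := hsi i; have := hc i; omega
      · intro v hv
        rw [Finset.mem_filter] at hv
        show (fun i => u i + (v i - u i)) = v
        funext i
        have := hv.2.1 i
        omega
      · intro s hs
        show (fun i => (u i + s i) - u i) = s
        funext i
        omega
      · intro v hv
        rw [Finset.mem_filter] at hv
        obtain ⟨-, h1, h2⟩ := hv
        rw [if_pos ⟨h1, h2⟩]
        have hper : ∀ i : Fin d, (-1 : ℚ) ^ ((w i - u i) - (v i - u i)) *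
            (((v i - u i).factorial : ℚ) * ((((w i - u i) - (v i - u i)).factorial : ℚ)))⁻¹
            = (-1 : ℚ) ^ (w i - v i) * (((v i - u i).factorial : ℚ))⁻¹ *
              (((w i - v i).factorial : ℚ))⁻¹ := by
          intro i
          have h3 : (w i - u i) - (v i - u i) = w i - v i := by
            have := h1 i; have := h2 i; have := hc i; omega
          rw [h3, mul_inv]
          ring
        show _ = ∏ i : Fin d, ((-1 : ℚ) ^ ((w i - u i) - (v i - u i)) *
            (((v i - u i).factorial : ℚ) * ((((w i - u i) - (v i - u i)).factorial : ℚ)))⁻¹)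
        rw [Finset.prod_congr rfl (fun i _ => hper i), Finset.prod_mul_distrib,
          Finset.prod_mul_distrib, Finset.prod_pow_eq_pow_sum]
    · trans (∏ i : Fin d, ∑ a ∈ range ((w i - u i) + 1), ((-1 : ℚ) ^ ((w i - u i) - a) *
        (((a.factorial : ℚ)) * ((((w i - u i) - a).factorial : ℚ)))⁻¹))
      · exact (Finset.prod_univ_sum (fun i : Fin d => range ((w i - u i) + 1))
          (fun i a => (-1 : ℚ) ^ ((w i - u i) - a) *
            (((a.factorial : ℚ)) * ((((w i - u i) - a).factorial : ℚ)))⁻¹)).symm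
      rw [Finset.prod_congr rfl (fun i _ => altBinom (w i - u i))]
      by_cases h : u = w
      · subst h
        rw [if_pos rfl]
        exact Finset.prod_eq_one fun i _ => by rw [Nat.sub_self, if_pos rfl]
      · rw [if_neg h]
        have : ∃ i, u i ≠ w i := by
          by_contra hno
          push_neg at hno
          exact h (funext hno)
        obtain ⟨i, hi⟩ := this
        refine Finset.prod_eq_zero (Finset.mem_univ i) ?_
        rw [if_neg]
        have := hc i
        omega
  · push_neg at hc
    obtain ⟨i0, hlt⟩ := hc
    rw [Finset.sum_eq_zero, if_neg]
    · intro h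
      rw [h] at hlt
      omega
    · intro v hv
      rw [if_neg]
      rintro ⟨h1, h2⟩
      have := h1 i0; have := h2 i0
      omega




lemma keyCJ {d k : ℕ} (u nn : Fin d → ℕ) (hu : ∑ i, u i ≤ k) :
    (∑ v ∈ (Fintype.piFinset fun _ : Fin d => Finset.range (k+1)).filter
        (fun v => ∑ i, v i ≤ k),
      if ∀ i, u i ≤ v i then
        (-1 : ℚ) ^ (∑ i, (v i - u i)) * (∏ i, (((v i - u i).factorial : ℚ))⁻¹) *
          (∏ i, (((nn i).descFactorial (v i) : ℚ)))
      else 0)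
    = (∏ i, (((nn i).descFactorial (u i)) : ℚ)) *
        ((-1 : ℚ) ^ (k - ∑ i, u i) / (((k - ∑ i, u i).factorial : ℚ)) *
          ∏ x ∈ range (k - ∑ i, u i), (((∑ i, (nn i - u i) : ℕ) : ℚ) - 1 - x)) := by
  classical
  set K := k - ∑ i, u i with hK
  set M := ∑ i, (nn i - u i) with hM
  set sS : Finset (Fin d → ℕ) :=
    (Fintype.piFinset fun _ : Fin d => Finset.range (K+1)).filter
      (fun s => ∑ i, s i ≤ K) with hsS
  rw [← Finset.sum_filter_of_ne (p := fun v => ∀ i, u i ≤ v i)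
      (fun v _ hne => by by_contra h; rw [if_neg h] at hne; exact hne rfl)]
  -- step 2: reindex to sS
  trans (∑ s ∈ sS, ((-1 : ℚ) ^ (∑ i, s i) * (∏ i, (((s i).factorial : ℚ))⁻¹) *
      ∏ i, (((nn i).descFactorial (u i + s i) : ℚ))))
  · refine Finset.sum_nbij' (fun v i => v i - u i) (fun s i => u i + s i)
      ?_ ?_ ?_ ?_ ?_
    · intro v hv
      simp only [Finset.mem_filter, Fintype.mem_piFinset, Finset.mem_range] at hv
      obtain ⟨⟨-, hvk⟩, huv⟩ := hv
      show (fun i => v i - u i) ∈ _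
      simp only [hsS, Finset.mem_filter, Fintype.mem_piFinset, Finset.mem_range]
      have hsum : (∑ i, (v i - u i)) + ∑ i, u i = ∑ i, v i := by
        rw [← Finset.sum_add_distrib]
        exact Finset.sum_congr rfl fun i _ => by have := huv i; omega
      have hsK : (∑ i, (v i - u i)) ≤ K := by omega
      refine ⟨fun i => ?_, hsK⟩
      have : v i - u i ≤ ∑ i', (v i' - u i') :=
        Finset.single_le_sum (f := fun i' => v i' - u i')
          (fun _ _ => Nat.zero_le _) (Finset.mem_univ i)
      omega
    · intro s hs
      simp only [hsS, Finset.mem_filter, Fintype.mem_piFinset, Finset.mem_range] at hs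
      obtain ⟨-, hsK⟩ := hs
      show (fun i => u i + s i) ∈ _
      simp only [Finset.mem_filter, Fintype.mem_piFinset, Finset.mem_range]
      have hsum : ∑ i, (u i + s i) = (∑ i, u i) + ∑ i, s i := Finset.sum_add_distrib
      have hvk : ∑ i, (u i + s i) ≤ k := by omega
      refine ⟨⟨fun i => ?_, hvk⟩, fun i => Nat.le_add_right _ _⟩
      have : u i + s i ≤ ∑ i', (u i' + s i') :=
        Finset.single_le_sum (f := fun i' => u i' + s i')
          (fun _ _ => Nat.zero_le _) (Finset.mem_univ i)
      omega
    · intro v hv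
      simp only [Finset.mem_filter] at hv
      show (fun i => u i + (v i - u i)) = v
      funext i
      have := hv.2 i
      omega
    · intro s hs
      show (fun i => (u i + s i) - u i) = s
      funext i
      omega
    · intro v hv
      simp only [Finset.mem_filter] at hv
      rw [if_pos hv.2]
      show _ = (-1 : ℚ) ^ (∑ i, (v i - u i)) * (∏ i, (((v i - u i).factorial : ℚ))⁻¹) *
        ∏ i, (((nn i).descFactorial (u i + (v i - u i)) : ℚ))
      congr 1
      refine Finset.prod_congr rfl fun i _ => ?_
      have h3 : u i + (v i - u i) = v i := by have := hv.2 i; omega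
      rw [h3]
  -- step 3: per-point split of descFactorial
  trans (∑ s ∈ sS, ((∏ i, (((nn i).descFactorial (u i)) : ℚ)) *
      ((-1 : ℚ) ^ (∑ i, s i) * ∏ i, (((nn i - u i).choose (s i) : ℚ)))))
  · refine Finset.sum_congr rfl fun s _ => ?_
    have hper : ∀ i : Fin d, (((s i).factorial : ℚ))⁻¹ *
        (((nn i).descFactorial (u i + s i) : ℚ))
        = (((nn i).descFactorial (u i)) : ℚ) * (((nn i - u i).choose (s i)) : ℚ) := by
      intro i
      rw [descFactorial_add' (nn i) (u i) (s i),
        Nat.descFactorial_eq_factorial_mul_choose (nn i - u i) (s i)]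
      have hne : ((s i).factorial : ℚ) ≠ 0 := by positivity
      push_cast
      field_simp
    rw [mul_assoc, ← Finset.prod_mul_distrib,
      Finset.prod_congr rfl (fun i _ => hper i), Finset.prod_mul_distrib]
    ring
  -- step 4: fiberwise in total degree
  rw [← Finset.sum_fiberwise_of_maps_to (g := fun s => ∑ i, s i) (t := range (K+1))
      (fun s hs => by
        simp only [hsS, Finset.mem_filter] at hs
        exact Finset.mem_range.mpr (Nat.lt_succ_of_le hs.2))]
  -- step 5: inner sums
  have hinner : ∀ t ∈ range (K+1),
      (∑ s ∈ sS.filter (fun s => ∑ i, s i = t),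
        ((∏ i, (((nn i).descFactorial (u i)) : ℚ)) *
          ((-1 : ℚ) ^ (∑ i, s i) * ∏ i, (((nn i - u i).choose (s i) : ℚ)))))
      = (∏ i, (((nn i).descFactorial (u i)) : ℚ)) * ((-1 : ℚ) ^ t * (M.choose t : ℚ)) := by
    intro t ht
    have htK : t ≤ K := Nat.lt_succ_iff.mp (Finset.mem_range.mp ht)
    have hset : sS.filter (fun s => ∑ i, s i = t) = Finset.univ.piAntidiag t := by
      ext s
      simp only [hsS, Finset.mem_filter, Fintype.mem_piFinset, Finset.mem_range,
        Finset.mem_piAntidiag]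
      constructor
      · rintro ⟨⟨-, -⟩, hst⟩
        exact ⟨hst, fun i _ => Finset.mem_univ i⟩
      · rintro ⟨hst, -⟩
        have hst' : (∑ i' : Fin d, s i') = t := hst
        have hcoord : ∀ i, s i ≤ ∑ i', s i' :=
          fun i => Finset.single_le_sum (f := fun i' => s i')
            (fun _ _ => Nat.zero_le _) (Finset.mem_univ i)
        exact ⟨⟨fun i => by have := hcoord i; omega, by omega⟩, hst⟩
    rw [hset]
    have hval : ∀ s ∈ Finset.univ.piAntidiag t,
        ((∏ i, (((nn i).descFactorial (u i)) : ℚ)) *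
          ((-1 : ℚ) ^ (∑ i, s i) * ∏ i, (((nn i - u i).choose (s i) : ℚ))))
        = (∏ i, (((nn i).descFactorial (u i)) : ℚ)) *
          ((-1 : ℚ) ^ t * ∏ i, (((nn i - u i).choose (s i) : ℚ))) := by
      intro s hs
      rw [(Finset.mem_piAntidiag.mp hs).1]
    rw [Finset.sum_congr rfl hval, ← Finset.mul_sum]
    congr 1
    rw [← Finset.mul_sum]
    congr 1
    have hcast : (∑ s ∈ Finset.univ.piAntidiag t, ∏ i, (((nn i - u i).choose (s i) : ℚ)))
        = ((∑ s ∈ Finset.univ.piAntidiag t, ∏ i, ((nn i - u i).choose (s i)) : ℕ) : ℚ) := by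
      push_cast
      rfl
    rw [hcast, multiVdm Finset.univ (fun i => nn i - u i) t]
  rw [Finset.sum_congr rfl hinner, ← Finset.mul_sum]
  congr 1
  exact altsum M K

end Stmt16Aux

open Stmt16Aux

/-- **structure of loneliness.** Let `d ≥ 1`, `k ≥ 1`, `N = C(d+k,d)`,
with `r : Fin N → ℕ^d` enumerating all multi-indices of total degree ≤ k.  Fix
`j ∈ {1,…,N}` and a monomial `a(x) = x^n`.  Then the complete generalised Wronskian
of the divided-power standard monomials `x^{r_m}/r_m!` with the `j`-th argument
replaced by `a(x)` equals
`((−1)^{k−|r_j|}/(k−|r_j|)!) · ∏_i ∏_{ℓ<r_j^i}(n_i − ℓ) · ∏_{ℓ=|r_j|+1}^{k}(deg a − ℓ)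
 · x^{n − r_j}` (the coefficient vanishing whenever `x^{r_j} ∤ a`). -/
theorem stmt16 (d k : ℕ) (hd : 1 ≤ d) (hk : 1 ≤ k)
    (N : ℕ) (hN : N = Nat.choose (d + k) d)
    (r : Fin N → Fin d → ℕ) (hinj : Function.Injective r)
    (hcomp : ∀ v : Fin d → ℕ, (∑ i, v i) ≤ k ↔ ∃ j, r j = v)
    (j : Fin N) (nn : Fin d → ℕ) :
    Matrix.det (Matrix.of fun m n : Fin N =>
        wDeriv d (r m)
          (if n = j then ∏ i, X i ^ nn i
           else C ((∏ i : Fin d, ((r n i).factorial : ℚ)))⁻¹ * ∏ i, X i ^ r n i))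
      = C (((-1 : ℚ) ^ (k - ∑ i, r j i) / ((k - ∑ i, r j i).factorial : ℚ)) *
            (∏ i : Fin d, ∏ ℓ ∈ Finset.range (r j i), ((nn i : ℚ) - (ℓ : ℚ))) *
            ∏ ℓ ∈ Finset.Icc ((∑ i, r j i) + 1) k, ((∑ i, (nn i : ℚ)) - (ℓ : ℚ))) *
          ∏ i : Fin d, X i ^ (nn i - r j i) := by
  classical
  have hrb : ∀ p : Fin N, (∑ i, r p i) ≤ k := fun p => (hcomp (r p)).mpr ⟨p, rfl⟩
  have hrc : ∀ (p : Fin N) (i : Fin d), r p i ≤ k := fun p i =>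
    le_trans (Finset.single_le_sum (f := fun i' => r p i')
      (fun _ _ => Nat.zero_le _) (Finset.mem_univ i)) (hrb p)
  set bigA : Finset (Fin d → ℕ) :=
    (Fintype.piFinset fun _ : Fin d => Finset.range (k+1)).filter
      (fun v => ∑ i, v i ≤ k) with hbigA
  have hmemA : ∀ p : Fin N, r p ∈ bigA := fun p => by
    simp only [hbigA, Finset.mem_filter, Fintype.mem_piFinset, Finset.mem_range]
    exact ⟨fun i => Nat.lt_succ_of_le (hrc p i), hrb p⟩
  have hsumQ : ∀ g : (Fin d → ℕ) → ℚ, ∑ p : Fin N, g (r p) = ∑ v ∈ bigA, g v := by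
    intro g
    refine Finset.sum_nbij r (fun p _ => hmemA p) (fun p _ q _ h => hinj h) ?_
      (fun p _ => rfl)
    intro v hv
    have hv' : v ∈ bigA := hv
    rw [hbigA, Finset.mem_filter] at hv'
    obtain ⟨p, hp⟩ := (hcomp v).mp hv'.2
    exact ⟨p, by simp, hp⟩
  have hCsum : ∀ g : (Fin d → ℕ) → ℚ,
      (∑ p : Fin N, C (g (r p)) : MvPolynomial (Fin d) ℚ) = C (∑ v ∈ bigA, g v) := by
    intro g
    rw [← map_sum, hsumQ g]
  -- matrices
  set B : Matrix (Fin N) (Fin N) (MvPolynomial (Fin d) ℚ) := Matrix.of fun m n =>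
    C ((∏ i, ((r n i).factorial : ℚ))⁻¹ * ∏ i, (((r n i).descFactorial (r m i)) : ℚ)) *
      ∏ i, X i ^ (r n i - r m i) with hB
  set vE : Fin N → MvPolynomial (Fin d) ℚ := fun m =>
    C (∏ i, (((nn i).descFactorial (r m i)) : ℚ)) * ∏ i, X i ^ (nn i - r m i) with hvE
  set Ci : Matrix (Fin N) (Fin N) (MvPolynomial (Fin d) ℚ) := Matrix.of fun n p =>
    if ∀ i, r n i ≤ r p i then
      C ((-1 : ℚ) ^ (∑ i, (r p i - r n i)) * (∏ i, (((r p i - r n i).factorial : ℚ))⁻¹)) *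
        ∏ i, X i ^ (r p i - r n i)
    else 0 with hCi
  -- the matrix of the statement is B with column j replaced by vE
  have hAeq : (Matrix.of fun m n : Fin N =>
      wDeriv d (r m)
        (if n = j then ∏ i, X i ^ nn i
         else C ((∏ i : Fin d, ((r n i).factorial : ℚ)))⁻¹ * ∏ i, X i ^ r n i))
      = B.updateCol j vE := by
    ext m n
    rw [Matrix.updateCol_apply, Matrix.of_apply]
    by_cases h : n = j
    · rw [if_pos h, if_pos h, hvE]
      have h0 : (∏ i, (X i : MvPolynomial (Fin d) ℚ) ^ nn i)
          = C (1 : ℚ) * ∏ i, X i ^ nn i := by rw [C_1, one_mul]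
      rw [h0, wDeriv_form, one_mul]
    · rw [if_neg h, if_neg h, wDeriv_form, hB]
      rfl
  -- key orthogonality
  have hBCmat : ∀ m p : Fin N, (∑ n, B m n * Ci n p)
      = if m = p then (1 : MvPolynomial (Fin d) ℚ) else 0 := by
    intro m p
    have hterm : ∀ n, B m n * Ci n p =
        C ((fun v => if (∀ i, r m i ≤ v i) ∧ (∀ i, v i ≤ r p i) then
            (-1 : ℚ) ^ (∑ i, (r p i - v i)) * (∏ i, (((v i - r m i).factorial : ℚ))⁻¹) *
              (∏ i, (((r p i - v i).factorial : ℚ))⁻¹)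
          else 0) (r n)) * ∏ i, X i ^ (r p i - r m i) := by
      intro n
      simp only [hB, hCi, Matrix.of_apply]
      by_cases h2 : ∀ i, r n i ≤ r p i
      · by_cases h1 : ∀ i, r m i ≤ r n i
        · rw [if_pos h2, if_pos ⟨h1, h2⟩]
          have hBc : (∏ i, ((r n i).factorial : ℚ))⁻¹ *
              ∏ i, (((r n i).descFactorial (r m i)) : ℚ)
              = ∏ i, (((r n i - r m i).factorial : ℚ))⁻¹ := by
            rw [← Finset.prod_inv_distrib, ← Finset.prod_mul_distrib]
            exact Finset.prod_congr rfl fun i _ => inv_fact_dF _ _ (h1 i)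
          have hXX : (∏ i, (X i : MvPolynomial (Fin d) ℚ) ^ (r n i - r m i)) *
              ∏ i, (X i : MvPolynomial (Fin d) ℚ) ^ (r p i - r n i)
              = ∏ i, (X i : MvPolynomial (Fin d) ℚ) ^ (r p i - r m i) := by
            rw [← Finset.prod_mul_distrib]
            refine Finset.prod_congr rfl fun i _ => ?_
            rw [← pow_add]
            congr 1
            have := h1 i; have := h2 i; omega
          rw [mul_mul_mul_comm, ← C_mul, hXX]
          congr 1
          rw [hBc]
          ring
        · push_neg at h1
          obtain ⟨i0, hlt⟩ := h1
          have hz : (∏ i, (((r n i).descFactorial (r m i)) : ℚ)) = 0 :=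
            Finset.prod_eq_zero (Finset.mem_univ i0)
              (by rw [Nat.descFactorial_eq_zero_iff_lt.mpr hlt, Nat.cast_zero])
          rw [if_pos h2, if_neg (show ¬((∀ i, r m i ≤ r n i) ∧ ∀ i, r n i ≤ r p i) from
            fun hand => absurd (hand.1 i0) (by omega))]
          simp [hz]
      · rw [if_neg h2, if_neg (show ¬((∀ i, r m i ≤ r n i) ∧ ∀ i, r n i ≤ r p i) from
          fun hand => h2 hand.2)]
        simp
    rw [Finset.sum_congr rfl (fun n _ => hterm n), ← Finset.sum_mul,
      hCsum (fun v => if (∀ i, r m i ≤ v i) ∧ (∀ i, v i ≤ r p i) then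
        (-1 : ℚ) ^ (∑ i, (r p i - v i)) * (∏ i, (((v i - r m i).factorial : ℚ))⁻¹) *
          (∏ i, (((r p i - v i).factorial : ℚ))⁻¹)
        else 0), hbigA, keyBC (r m) (r p) (hrc p) (hrb p)]
    by_cases h : m = p
    · subst h
      rw [if_pos rfl, if_pos rfl]
      simp [Nat.sub_self]
    · rw [if_neg h, if_neg (fun he => h (hinj he))]
      simp
  -- determinant of B is 1
  have hdetB : B.det = 1 := by
    have htri : B.BlockTriangular (fun m => ∑ i, r m i) := by
      intro m n hlt
      have hex : ∃ i, r n i < r m i := by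
        by_contra hno
        push_neg at hno
        exact absurd (Finset.sum_le_sum (fun i _ => hno i))
          (by simpa using Nat.not_le.mpr hlt)
      obtain ⟨i0, hi0⟩ := hex
      have hz : (∏ i, (((r n i).descFactorial (r m i)) : ℚ)) = 0 :=
        Finset.prod_eq_zero (Finset.mem_univ i0)
          (by rw [Nat.descFactorial_eq_zero_iff_lt.mpr hi0, Nat.cast_zero])
      simp only [hB, Matrix.of_apply]
      rw [hz, mul_zero]
      simp
    rw [Matrix.BlockTriangular.det htri]
    refine Finset.prod_eq_one fun a _ => ?_
    have hblock : B.toSquareBlock (fun m => ∑ i, r m i) a = 1 := by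
      ext ⟨m, hm⟩ ⟨n, hn⟩
      rw [Matrix.toSquareBlock_def]
      by_cases hmn : m = n
      · subst hmn
        have hone : ((1 : Matrix {m0 // (∑ i, r m0 i) = a} {m0 // (∑ i, r m0 i) = a}
            (MvPolynomial (Fin d) ℚ)) ⟨m, hm⟩ ⟨m, hn⟩) = 1 := by
          rw [Matrix.one_apply_eq]
        rw [hone]
        simp only [hB, Matrix.of_apply]
        have hc1 : (∏ i, ((r m i).factorial : ℚ))⁻¹ *
            ∏ i, (((r m i).descFactorial (r m i)) : ℚ) = 1 := by
          have hdd : (∏ i, (((r m i).descFactorial (r m i)) : ℚ))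
              = ∏ i, ((r m i).factorial : ℚ) :=
            Finset.prod_congr rfl fun i _ => by rw [Nat.descFactorial_self]
          have hne : (∏ i, ((r m i).factorial : ℚ)) ≠ 0 :=
            Finset.prod_ne_zero_iff.mpr fun i _ =>
              Nat.cast_ne_zero.mpr (Nat.factorial_ne_zero _)
          rw [hdd, inv_mul_cancel₀ hne]
        rw [hc1]
        simp [Nat.sub_self]
      · have hone : ((1 : Matrix {m0 // (∑ i, r m0 i) = a} {m0 // (∑ i, r m0 i) = a}
            (MvPolynomial (Fin d) ℚ)) ⟨m, hm⟩ ⟨n, hn⟩) = 0 := by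
          rw [Matrix.one_apply_ne]
          exact fun h => hmn (congrArg Subtype.val h)
        rw [hone]
        have hex : ∃ i, r n i < r m i := by
          by_contra hno
          push_neg at hno
          have heq : r m = r n := by
            funext i
            by_contra hne
            have hlt : r m i < r n i := by
              have := hno i; omega
            have : (∑ i, r m i) < ∑ i, r n i :=
              Finset.sum_lt_sum (fun i _ => hno i) ⟨i, Finset.mem_univ i, hlt⟩
            omega
          exact hmn (hinj heq)
        obtain ⟨i0, hi0⟩ := hex
        have hz : (∏ i, (((r n i).descFactorial (r m i)) : ℚ)) = 0 :=
          Finset.prod_eq_zero (Finset.mem_univ i0)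
            (by rw [Nat.descFactorial_eq_zero_iff_lt.mpr hi0, Nat.cast_zero])
        simp only [hB, Matrix.of_apply]
        rw [hz, mul_zero]
        simp
    rw [hblock, Matrix.det_one]
  -- the coefficient vector
  set cc : Fin N → MvPolynomial (Fin d) ℚ := fun n => ∑ p, Ci n p * vE p with hcc
  have hvcomb : vE = fun m => ∑ n, cc n • B m n := by
    funext m
    symm
    have h1 : ∑ n, cc n • B m n = ∑ n, ∑ p, B m n * (Ci n p * vE p) := by
      refine Finset.sum_congr rfl fun n _ => ?_
      rw [smul_eq_mul, hcc, Finset.sum_mul]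
      exact Finset.sum_congr rfl fun p _ => by ring
    rw [h1, Finset.sum_comm]
    have h2 : ∀ p, ∑ n, B m n * (Ci n p * vE p) = (∑ n, B m n * Ci n p) * vE p := by
      intro p
      rw [Finset.sum_mul]
      exact Finset.sum_congr rfl fun n _ => (mul_assoc _ _ _).symm
    rw [Finset.sum_congr rfl (fun p _ => h2 p),
      Finset.sum_congr rfl (fun p _ => by rw [hBCmat m p])]
    simp
  -- determinant computation
  rw [hAeq]
  have hdet2 : (B.updateCol j vE).det = cc j * B.det := by
    have h3 := Matrix.det_updateCol_sum B j cc
    rw [smul_eq_mul] at h3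
    rw [hvcomb]
    exact h3
  rw [hdet2, hdetB, mul_one]
  -- compute cc j
  have hterm2 : ∀ p, Ci j p * vE p =
      C ((fun v => if ∀ i, r j i ≤ v i then
          (-1 : ℚ) ^ (∑ i, (v i - r j i)) * (∏ i, (((v i - r j i).factorial : ℚ))⁻¹) *
            (∏ i, (((nn i).descFactorial (v i)) : ℚ))
        else 0) (r p)) * ∏ i, X i ^ (nn i - r j i) := by
    intro p
    simp only [hCi, hvE, Matrix.of_apply]
    by_cases h1 : ∀ i, r j i ≤ r p i
    · rw [if_pos h1, if_pos h1, mul_mul_mul_comm, ← C_mul]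
      by_cases h3 : ∀ i, r p i ≤ nn i
      · have hXX : (∏ i, (X i : MvPolynomial (Fin d) ℚ) ^ (r p i - r j i)) *
            ∏ i, (X i : MvPolynomial (Fin d) ℚ) ^ (nn i - r p i)
            = ∏ i, (X i : MvPolynomial (Fin d) ℚ) ^ (nn i - r j i) := by
          rw [← Finset.prod_mul_distrib]
          refine Finset.prod_congr rfl fun i _ => ?_
          rw [← pow_add]
          congr 1
          have := h1 i; have := h3 i; omega
        rw [hXX]
      · push_neg at h3
        obtain ⟨i0, hlt⟩ := h3
        have hz : (∏ i, (((nn i).descFactorial (r p i)) : ℚ)) = 0 :=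
          Finset.prod_eq_zero (Finset.mem_univ i0)
            (by rw [Nat.descFactorial_eq_zero_iff_lt.mpr hlt, Nat.cast_zero])
        rw [hz]
        simp
    · rw [if_neg h1, if_neg h1]
      simp
  have hccj : cc j = C ((∏ i, (((nn i).descFactorial (r j i)) : ℚ)) *
      ((-1 : ℚ) ^ (k - ∑ i, r j i) / (((k - ∑ i, r j i).factorial : ℚ)) *
        ∏ x ∈ Finset.range (k - ∑ i, r j i),
          (((∑ i, (nn i - r j i) : ℕ) : ℚ) - 1 - x))) *
      ∏ i, X i ^ (nn i - r j i) := by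
    have h4 : cc j = ∑ p, Ci j p * vE p := rfl
    rw [h4, Finset.sum_congr rfl (fun p _ => hterm2 p), ← Finset.sum_mul,
      hCsum (fun v => if ∀ i, r j i ≤ v i then
        (-1 : ℚ) ^ (∑ i, (v i - r j i)) * (∏ i, (((v i - r j i).factorial : ℚ))⁻¹) *
          (∏ i, (((nn i).descFactorial (v i)) : ℚ))
        else 0), hbigA, keyCJ (r j) nn (hrb j)]
  rw [hccj]
  -- final coefficient identity
  congr 1
  have hA0 : (∏ i, (((nn i).descFactorial (r j i)) : ℚ))
      = ∏ i : Fin d, ∏ ℓ ∈ Finset.range (r j i), ((nn i : ℚ) - (ℓ : ℚ)) :=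
    Finset.prod_congr rfl fun i _ => castDF (nn i) (r j i)
  rw [hA0]
  by_cases hcase : ∀ i, r j i ≤ nn i
  · have hMc : (((∑ i, (nn i - r j i) : ℕ)) : ℚ)
        = (∑ i, (nn i : ℚ)) - ((∑ i, r j i : ℕ) : ℚ) := by
      rw [Nat.cast_sum, Nat.cast_sum]
      rw [← Finset.sum_sub_distrib]
      exact Finset.sum_congr rfl fun i _ => by
        rw [Nat.cast_sub (hcase i)]
    have hIcc : (∏ ℓ ∈ Finset.Icc ((∑ i, r j i) + 1) k, ((∑ i, (nn i : ℚ)) - (ℓ : ℚ)))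
        = ∏ x ∈ Finset.range (k - ∑ i, r j i),
            (((∑ i, (nn i - r j i) : ℕ) : ℚ) - 1 - x) := by
      rw [← Finset.Ico_add_one_right_eq_Icc, Finset.prod_Ico_eq_prod_range]
      rw [show k + 1 - ((∑ i, r j i) + 1) = k - ∑ i, r j i by omega]
      refine Finset.prod_congr rfl fun x _ => ?_
      rw [hMc]
      push_cast
      ring
    rw [hIcc]
    congr 1
    ring
  · push_neg at hcase
    obtain ⟨i0, hlt⟩ := hcase
    have hz : (∏ i : Fin d, ∏ ℓ ∈ Finset.range (r j i), ((nn i : ℚ) - (ℓ : ℚ))) = 0 := by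
      refine Finset.prod_eq_zero (Finset.mem_univ i0) ?_
      refine Finset.prod_eq_zero (Finset.mem_range.mpr hlt) ?_
      rw [sub_self]
    rw [hz]
    congr 1
    ring
end

section
/- Let d ≥ 2 and consider the complete generalised Wronskian of order k=1: W(p₀, p₁, ..., p_d) = det of the (d+1)×(d+1) matrix whose first row is (p₀,...,p_d) and whose (i+1)-st row is (∂p₀/∂x^i, ..., ∂p_d/∂x^i). Let p = ∏_i (x^i)^{n_i} and q = ∏_i (x^i)^{m_i} be monomials with nonnegative integer exponents. Then W(q, p, x², x³, ..., x^d) = {(deg p − 1)·m₁ − (deg q − 1)·n₁} · pq/x¹, where deg p = ∑n_i, deg q = ∑m_i, understood as a polynomial identity (the coefficient vanishes whenever m₁ = n₁ = 0). -/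
open MvPolynomial


open Matrix

lemma lemK {R : Type*} [CommRing R] : ∀ (n : ℕ) (N : Matrix (Fin (n+2)) (Fin (n+2)) R),
    (∀ j : Fin (n+2), 2 ≤ (j:ℕ) → N 0 j = 0) →
    (∀ j : Fin (n+2), 2 ≤ (j:ℕ) → N (Fin.last (n+1)) j = 0) →
    (∀ (i j : Fin (n+2)), 1 ≤ (i:ℕ) → (i:ℕ) ≤ n → 2 ≤ (j:ℕ) →
      N i j = if (j:ℕ) = (i:ℕ)+1 then 1 else 0) →
    N.det = (-1)^n * (N 0 0 * N (Fin.last (n+1)) 1 - N 0 1 * N (Fin.last (n+1)) 0) := by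
  intro n
  induction n with
  | zero =>
    intro N _ _ _
    have hlast : (Fin.last 1 : Fin 2) = 1 := rfl
    rw [Matrix.det_fin_two, hlast]
    ring
  | succ n ih =>
    intro N htop hbot hmid
    rw [Matrix.det_succ_column N (Fin.last (n+2))]
    rw [Finset.sum_eq_single (⟨n+1, by omega⟩ : Fin (n+3))]
    · have h1 : N ⟨n+1, by omega⟩ (Fin.last (n+2)) = 1 := by
        rw [hmid] <;> simp [Fin.last]
      rw [h1]
      set A := N.submatrix (Fin.succAbove ⟨n+1, by omega⟩) (Fin.succAbove (Fin.last (n+2))) with hA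
      have hrow : ∀ r : Fin (n+2), (Fin.succAbove (⟨n+1, by omega⟩ : Fin (n+3)) r : Fin (n+3))
          = if (r:ℕ) ≤ n then ⟨r, by omega⟩ else Fin.last (n+2) := by
        intro r
        rcases le_or_gt (r:ℕ) n with h | h
        · rw [if_pos h, Fin.succAbove, if_pos]
          · rfl
          · simp [Fin.lt_def, Fin.castSucc, Fin.castAdd, Fin.castLE]; omega
        · rw [if_neg (by omega)]
          have : (r:ℕ) = n+1 := by have := r.isLt; omega
          rw [Fin.succAbove, if_neg]
          · apply Fin.ext; simp [Fin.succ, this]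
          · simp [Fin.lt_def, Fin.castSucc, Fin.castAdd, Fin.castLE]; omega
      have hcol : ∀ c : Fin (n+2), (Fin.succAbove (Fin.last (n+2)) c : Fin (n+3)) = ⟨c, by omega⟩ := by
        intro c
        rw [Fin.succAbove, if_pos]
        · rfl
        · simp [Fin.lt_def, Fin.castSucc, Fin.castAdd, Fin.castLE, Fin.last]
      have eA : ∀ (r c : Fin (n+2)), A r c
          = N (if (r:ℕ) ≤ n then ⟨r, by omega⟩ else Fin.last (n+2)) ⟨c, by omega⟩ := by
        intro r c
        rw [hA, Matrix.submatrix_apply, hrow, hcol]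
      have hAdet := ih A ?_ ?_ ?_
      · rw [hAdet]
        have e00 : A 0 0 = N 0 0 := by rw [eA]; simp
        have e01 : A 0 1 = N 0 1 := by rw [eA]; simp
        have el0 : A (Fin.last (n+1)) 0 = N (Fin.last (n+2)) 0 := by
          rw [eA]; simp [Fin.last]
        have el1 : A (Fin.last (n+1)) 1 = N (Fin.last (n+2)) 1 := by
          rw [eA]; simp [Fin.last]
        rw [e00, e01, el0, el1]
        have hp : ((-1:R))^((((⟨n+1, by omega⟩ : Fin (n+3)):ℕ)) + ((Fin.last (n+2) : Fin (n+3)):ℕ)) * (-1:R)^n = (-1:R)^(n+1) := by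
          simp only [Fin.last]
          rw [← pow_add]
          have h3 : (n+1)+(n+2)+n = 2*(n+1) + (n+1) := by ring
          rw [h3, pow_add, pow_mul]
          simp
        calc ((-1:R))^((((⟨n+1, by omega⟩ : Fin (n+3)):ℕ)) + ((Fin.last (n+2) : Fin (n+3)):ℕ)) * 1 *
              ((-1)^n * (N 0 0 * N (Fin.last (n+2)) 1 - N 0 1 * N (Fin.last (n+2)) 0))
            = (((-1:R))^((((⟨n+1, by omega⟩ : Fin (n+3)):ℕ)) + ((Fin.last (n+2) : Fin (n+3)):ℕ)) * (-1)^n) *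
              (N 0 0 * N (Fin.last (n+2)) 1 - N 0 1 * N (Fin.last (n+2)) 0) := by ring
          _ = _ := by rw [hp]
      · intro j hj
        rw [eA]
        simp only [Fin.val_zero, Nat.zero_le, if_pos]
        apply htop
        simpa using hj
      · intro j hj
        rw [eA]
        rw [if_neg (by simp [Fin.last])]
        apply hbot
        simpa using hj
      · intro i j hi1 hi2 hj
        rw [eA, if_pos hi2]
        rw [hmid _ _ (by simpa using hi1) (by simpa using hi2.trans (Nat.le_succ n)) (by simpa using hj)]
    · intro b _ hb
      have hz : N b (Fin.last (n+2)) = 0 := by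
        rcases Nat.eq_zero_or_pos (b:ℕ) with h0 | h0
        · have : b = 0 := Fin.ext h0
          rw [this]; exact htop _ (by simp [Fin.last])
        · rcases eq_or_lt_of_le (Nat.lt_succ_iff.mp b.isLt) with he | hl
          · have : b = Fin.last (n+2) := Fin.ext (by rw [Fin.val_last]; exact he)
            rw [this]; exact hbot _ (by simp [Fin.last])
          · rw [hmid _ _ h0 (by omega) (by simp [Fin.last])]
            rw [if_neg]
            simp only [Fin.last]
            intro hcon
            apply hb
            apply Fin.ext
            simp [Fin.last] at hl ⊢
            omega
      rw [hz]; ring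
    · intro h
      simp at h

set_option maxHeartbeats 2000000 in
lemma lemL {R : Type*} [CommRing R] : ∀ (n : ℕ) (M : Matrix (Fin (n+2)) (Fin (n+2)) R),
    (∀ j : Fin (n+2), 2 ≤ (j:ℕ) → M 1 j = 0) →
    (∀ (i j : Fin (n+2)), 2 ≤ (i:ℕ) → 2 ≤ (j:ℕ) →
      M i j = if i = j then 1 else 0) →
    M.det = (M 0 0 - ∑ k : Fin (n+2), if 2 ≤ (k:ℕ) then M 0 k * M k 0 else 0) * M 1 1
          - (M 0 1 - ∑ k : Fin (n+2), if 2 ≤ (k:ℕ) then M 0 k * M k 1 else 0) * M 1 0 := by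
  intro n
  induction n with
  | zero =>
    intro M _ _
    rw [Matrix.det_fin_two]
    have : ∀ f : Fin 2 → R, (∑ k : Fin 2, if 2 ≤ (k:ℕ) then f k else 0) = 0 := by
      intro f; rw [Fin.sum_univ_two]; norm_num
    rw [this, this]
    ring
  | succ n ih =>
    intro M hrow1 hid
    rw [Matrix.det_succ_column M (Fin.last (n+2))]
    have hcol : ∀ c : Fin (n+2), (Fin.succAbove (Fin.last (n+2)) c : Fin (n+3)) = ⟨c, by omega⟩ := by
      intro c
      rw [Fin.succAbove, if_pos]
      · rfl
      · simp [Fin.lt_def, Fin.castSucc, Fin.castAdd, Fin.castLE, Fin.last]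
    have e1' : (⟨((1 : Fin (n+2)):ℕ), by omega⟩ : Fin (n+3)) = 1 := by
      apply Fin.ext; simp
    have hsum : ∀ i : Fin (n+3), (i:ℕ) ≠ 0 → i ≠ Fin.last (n+2) →
        (-1:R)^((i:ℕ) + ((Fin.last (n+2) : Fin (n+3)):ℕ)) * M i (Fin.last (n+2)) *
          (M.submatrix (Fin.succAbove i) (Fin.succAbove (Fin.last (n+2)))).det = 0 := by
      intro i h0 hl
      have hiv : (i:ℕ) < n+2 := by
        rcases eq_or_lt_of_le (Nat.lt_succ_iff.mp i.isLt) with he | h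
        · exact absurd (Fin.ext (by rw [Fin.val_last]; exact he)) hl
        · exact h
      rcases Nat.eq_or_lt_of_le (Nat.one_le_iff_ne_zero.mpr h0) with h1 | h2
      · have : i = 1 := Fin.ext (by simp [← h1])
        rw [this, hrow1 _ (by simp [Fin.last])]
        ring
      · rw [hid _ _ (by omega) (by simp [Fin.last]), if_neg hl]
        ring
    rw [Finset.sum_eq_add_sum_sdiff_singleton_of_mem (Finset.mem_univ 0) , Finset.sum_eq_single (Fin.last (n+2))]
    · -- main two terms
      have hAdet := lemK n (M.submatrix (Fin.succAbove 0) (Fin.succAbove (Fin.last (n+2)))) ?_ ?_ ?_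
      · have hBdet := ih (M.submatrix (Fin.succAbove (Fin.last (n+2))) (Fin.succAbove (Fin.last (n+2)))) ?_ ?_
        · rw [hAdet, hBdet]
          have eB : ∀ r c : Fin (n+2),
              M.submatrix (Fin.succAbove (Fin.last (n+2))) (Fin.succAbove (Fin.last (n+2))) r c
              = M ⟨r, by omega⟩ ⟨c, by omega⟩ := by
            intro r c
            rw [Matrix.submatrix_apply, hcol, hcol]
          have eA : ∀ r c : Fin (n+2),
              M.submatrix (Fin.succAbove 0) (Fin.succAbove (Fin.last (n+2))) r c
              = M ⟨(r:ℕ)+1, by omega⟩ ⟨c, by omega⟩ := by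
            intro r c
            rw [Matrix.submatrix_apply, hcol, Fin.succAbove_zero]
            rfl
          simp only [eA, eB]
          have hll : M (Fin.last (n+2)) (Fin.last (n+2)) = 1 := by
            rw [hid _ _ (by simp [Fin.last]) (by simp [Fin.last]), if_pos rfl]
          rw [hll]
          have hs0 : (∑ k : Fin (n+3), if 2 ≤ (k:ℕ) then M 0 k * M k 0 else 0)
              = (∑ k : Fin (n+2), if 2 ≤ (k:ℕ) then M 0 ⟨k, by omega⟩ * M ⟨k, by omega⟩ 0 else 0)
                + M 0 (Fin.last (n+2)) * M (Fin.last (n+2)) 0 := by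
            rw [Fin.sum_univ_castSucc]
            congr 1
          have hs1 : (∑ k : Fin (n+3), if 2 ≤ (k:ℕ) then M 0 k * M k 1 else 0)
              = (∑ k : Fin (n+2), if 2 ≤ (k:ℕ) then M 0 ⟨k, by omega⟩ * M ⟨k, by omega⟩ 1 else 0)
                + M 0 (Fin.last (n+2)) * M (Fin.last (n+2)) 1 := by
            rw [Fin.sum_univ_castSucc]
            congr 1
          rw [hs0, hs1]
          have e0 : (⟨0, by omega⟩ : Fin (n+3)) = 0 := rfl
          have e1 : (⟨1, by omega⟩ : Fin (n+3)) = 1 := rfl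
          have elast : (⟨((Fin.last (n+1) : Fin (n+2)):ℕ) + 1, by omega⟩ : Fin (n+3)) = Fin.last (n+2) := by
            apply Fin.ext; simp [Fin.last]
          simp only [Fin.val_zero, Fin.val_one, zero_add, elast, e0, e1]
          simp only [Fin.val_last]
          have hp1 : (-1:R)^(n+2) * (-1:R)^n = 1 := by
            rw [← pow_add]
            have h3 : n+2+n = 2*(n+1) := by ring
            rw [h3, pow_mul]
            simp
          have hp2 : (-1:R)^(n+2+(n+2)) = 1 := by
            have h3 : n+2+(n+2) = 2*(n+2) := by ring
            rw [h3, pow_mul]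
            simp
          rw [hp2]
          linear_combination (M 0 (Fin.last (n+2)) *
            (M 1 0 * M (Fin.last (n+2)) 1 - M 1 1 * M (Fin.last (n+2)) 0)) * hp1
        · intro j hj
          simp only [Matrix.submatrix_apply, hcol]
          rw [e1']
          exact hrow1 _ (by simpa using hj)
        · intro i j hi hj
          simp only [Matrix.submatrix_apply, hcol]
          rw [hid _ _ (by simpa using hi) (by simpa using hj)]
          simp [Fin.ext_iff]
      · intro j hj
        rw [Matrix.submatrix_apply, hcol, Fin.succAbove_zero]
        have : (Fin.succ (0 : Fin (n+2))) = (1 : Fin (n+3)) := by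
          apply Fin.ext; simp
        rw [this]
        exact hrow1 _ (by simpa using hj)
      · intro j hj
        rw [Matrix.submatrix_apply, hcol, Fin.succAbove_zero]
        rw [hid _ _ (by simp [Fin.last]) (by simpa using hj)]
        rw [if_neg]
        intro hcon
        have := congrArg Fin.val hcon
        simp [Fin.last] at this
        omega
      · intro i j hi1 hi2 hj
        rw [Matrix.submatrix_apply, hcol, Fin.succAbove_zero]
        rw [hid _ _ (by simp [Fin.val_succ]; omega) (by simpa using hj)]
        have : (Fin.succ i = (⟨(j:ℕ), by omega⟩ : Fin (n+3))) ↔ ((j:ℕ) = (i:ℕ)+1) := by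
          rw [Fin.ext_iff]
          simp [Fin.val_succ, eq_comm]
        simp only [this]
    · intro b hb hbl
      apply hsum b _ hbl
      simp at hb
      intro hb0
      exact hb (Fin.ext hb0)
    · intro h
      simp at h

open MvPolynomial Finsupp

section Helpers

variable {d : ℕ}

lemma prodX (f : Fin d → ℕ) :
    (∏ i : Fin d, X i ^ f i : MvPolynomial (Fin d) ℚ)
      = monomial (Finsupp.equivFunOnFinite.symm f) (1:ℚ) := by
  rw [← prod_X_pow_eq_monomial]
  refine (Finset.prod_subset (Finset.subset_univ _) ?_).symm
  intro x _ hx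
  rw [show f x = 0 from Finsupp.notMem_support_iff.mp hx, pow_zero]

lemma keyXmul (f : Fin d → ℕ) (i : Fin d) :
    (X i : MvPolynomial (Fin d) ℚ) *
        pderiv i (monomial (Finsupp.equivFunOnFinite.symm f) (1:ℚ))
      = C (f i : ℚ) * monomial (Finsupp.equivFunOnFinite.symm f) 1 := by
  have hFi : (Finsupp.equivFunOnFinite.symm f) i = f i := rfl
  rw [pderiv_monomial, one_mul, X, monomial_mul, C_apply, monomial_mul, hFi]
  rcases Nat.eq_zero_or_pos (f i) with h0 | h0
  · simp [h0]
  · rw [one_mul, mul_one]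
    congr 2
    ext j
    simp only [Finsupp.add_apply, Finsupp.tsub_apply, Finsupp.single_apply, Finsupp.coe_zero,
      Pi.zero_apply]
    rcases eq_or_ne i j with rfl | hne
    · rw [hFi]
      simp
      omega
    · simp [hne]

lemma keyMulDeriv (f g : Fin d → ℕ) (i : Fin d) :
    (monomial (Finsupp.equivFunOnFinite.symm g) (1:ℚ)) *
        pderiv i (monomial (Finsupp.equivFunOnFinite.symm f) (1:ℚ))
      = C (f i : ℚ) * monomial (Finsupp.equivFunOnFinite.symm
          (fun j => f j + g j - (if j = i then 1 else 0))) 1 := by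
  have hFi : (Finsupp.equivFunOnFinite.symm f) i = f i := rfl
  rw [pderiv_monomial, one_mul, monomial_mul, C_apply, monomial_mul, hFi]
  rcases Nat.eq_zero_or_pos (f i) with h0 | h0
  · simp [h0]
  · rw [one_mul, mul_one]
    congr 2
    ext j
    simp only [Finsupp.add_apply, Finsupp.tsub_apply, Finsupp.single_apply, Finsupp.coe_zero,
      Pi.zero_apply]
    have h1 : (Finsupp.equivFunOnFinite.symm g) j = g j := rfl
    have h2 : (Finsupp.equivFunOnFinite.symm f) j = f j := rfl
    have h3 : (Finsupp.equivFunOnFinite.symm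
        (fun j => f j + g j - (if j = i then 1 else 0))) j
        = f j + g j - (if j = i then 1 else 0) := rfl
    rw [h1, h2, h3]
    rcases eq_or_ne i j with rfl | hne
    · simp
      omega
    · simp [hne, Ne.symm hne]
      omega

end Helpers

open Matrix MvPolynomial in
theorem stmt19aux (e : ℕ) (nn mm : Fin (e+2) → ℕ)
    (M : Matrix (Fin (e+1+2)) (Fin (e+1+2)) (MvPolynomial (Fin (e+2)) ℚ))
    (hM : ∀ i j : Fin (e+1+2), M i j =
      (if hi : (i : ℕ) = 0 then id
       else ⇑(pderiv (⟨(i : ℕ) - 1, by have := i.isLt; omega⟩ : Fin (e+2))))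
      (if (j : ℕ) = 0 then ∏ i, X i ^ mm i
       else if (j : ℕ) = 1 then (∏ i, X i ^ nn i : MvPolynomial (Fin (e+2)) ℚ)
       else X (⟨(j : ℕ) - 1, by have := j.isLt; omega⟩ : Fin (e+2)))) :
    M.det
      = C ((((∑ i, (nn i : ℚ)) - 1) * ((mm ⟨0, by omega⟩ : ℕ) : ℚ)) -
            (((∑ i, (mm i : ℚ)) - 1) * ((nn ⟨0, by omega⟩ : ℕ) : ℚ))) *
          ∏ i : Fin (e+2), X i ^ (nn i + mm i - (if (i : ℕ) = 0 then 1 else 0)) := by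
  have hq := prodX mm
  have hp := prodX nn
  have h1 : ∀ j : Fin (e+1+2), 2 ≤ (j:ℕ) → M 1 j = 0 := by
    intro j hj
    rw [hM, dif_neg (by simp), if_neg (by omega), if_neg (by omega)]
    apply pderiv_X_of_ne
    intro hcon
    have := congrArg Fin.val hcon
    simp at this
    omega
  have h2 : ∀ i j : Fin (e+1+2), 2 ≤ (i:ℕ) → 2 ≤ (j:ℕ) → M i j = if i = j then 1 else 0 := by
    intro i j hi hj
    rw [hM, dif_neg (by omega), if_neg (by omega), if_neg (by omega)]
    rcases eq_or_ne i j with rfl | hne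
    · rw [if_pos rfl]
      exact pderiv_X_self _
    · rw [if_neg hne]
      apply pderiv_X_of_ne
      intro hcon
      have := congrArg Fin.val hcon
      simp at this
      exact hne (Fin.ext (by omega))
  have hM00 : M 0 0 = monomial (Finsupp.equivFunOnFinite.symm mm) 1 := by
    rw [hM, dif_pos (by simp), id_eq, if_pos (by simp), hq]
  have hM01 : M 0 1 = monomial (Finsupp.equivFunOnFinite.symm nn) 1 := by
    rw [hM, dif_pos (by simp), id_eq, if_neg (by simp), if_pos (by simp), hp]
  have hidx0 : ∀ h : ((1 : Fin (e+1+2)) : ℕ) - 1 < e + 2,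
      (⟨((1 : Fin (e+1+2)) : ℕ) - 1, h⟩ : Fin (e+2)) = 0 := by
    intro h
    apply Fin.ext
    simp
  have hM10 : M 1 0 = pderiv (0 : Fin (e+2)) (monomial (Finsupp.equivFunOnFinite.symm mm) 1) := by
    rw [hM, dif_neg (by simp), if_pos (by simp), hq, hidx0]
  have hM11 : M 1 1 = pderiv (0 : Fin (e+2)) (monomial (Finsupp.equivFunOnFinite.symm nn) 1) := by
    rw [hM, dif_neg (by simp), if_neg (by simp), if_pos (by simp), hp, hidx0]
  have hsum : ∀ g : Fin (e+2) → ℕ,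
      (∑ i : Fin (e+2), if 1 ≤ (i:ℕ) then C (g i : ℚ) else 0)
        = (C ((∑ i, (g i : ℚ)) - (g 0 : ℚ)) : MvPolynomial (Fin (e+2)) ℚ) := by
    intro g
    have hterm : ∀ i : Fin (e+2),
        (if 1 ≤ (i:ℕ) then C (g i:ℚ) else 0 : MvPolynomial (Fin (e+2)) ℚ)
          = C (g i:ℚ) - (if i = 0 then C (g i:ℚ) else 0) := by
      intro i
      rcases Nat.lt_or_ge (i:ℕ) 1 with h | h
      · have hi0 : i = 0 := Fin.ext (by simpa using Nat.lt_one_iff.mp h)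
        rw [if_neg (by omega), if_pos hi0]
        simp
      · rw [if_pos h, if_neg (by intro hcon; rw [hcon] at h; simp at h)]
        simp
    rw [Finset.sum_congr rfl (fun i _ => hterm i), Finset.sum_sub_distrib,
      Finset.sum_ite_eq' Finset.univ (0 : Fin (e+2)) (fun i => (C (g i:ℚ) : MvPolynomial (Fin (e+2)) ℚ))]
    simp [map_sub]
  have hScol : ∀ (g : Fin (e+2) → ℕ) (c : Fin (e+1+2)), ((c:ℕ) = 0 ∨ (c:ℕ) = 1) →
      (∀ k : Fin (e+1+2), 2 ≤ (k:ℕ) →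
        M k c = pderiv (⟨(k:ℕ)-1, by have := k.isLt; omega⟩ : Fin (e+2))
          (monomial (Finsupp.equivFunOnFinite.symm g) 1)) →
      (∑ k : Fin (e+1+2), if 2 ≤ (k:ℕ) then M 0 k * M k c else 0)
        = C ((∑ i, (g i : ℚ)) - (g 0 : ℚ)) * monomial (Finsupp.equivFunOnFinite.symm g) 1 := by
    intro g c _ hent
    have step1 : ∀ k : Fin (e+1+2), 2 ≤ (k:ℕ) →
        M 0 k * M k c = C (g ⟨(k:ℕ)-1, by have := k.isLt; omega⟩ : ℚ) *
          monomial (Finsupp.equivFunOnFinite.symm g) 1 := by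
      intro k hk
      have hM0k : M 0 k = X ⟨(k:ℕ)-1, by have := k.isLt; omega⟩ := by
        rw [hM, dif_pos (by simp), id_eq, if_neg (by omega), if_neg (by omega)]
      rw [hM0k, hent k hk, keyXmul]
    calc (∑ k : Fin (e+1+2), if 2 ≤ (k:ℕ) then M 0 k * M k c else 0)
        = ∑ k : Fin (e+1+2), (if 2 ≤ (k:ℕ) then C (g ⟨(k:ℕ)-1, by have := k.isLt; omega⟩ : ℚ) *
            monomial (Finsupp.equivFunOnFinite.symm g) 1 else 0) := by
          apply Finset.sum_congr rfl
          intro k _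
          split
          · exact step1 k ‹_›
          · rfl
      _ = ∑ i : Fin (e+2), (if 1 ≤ (i:ℕ) then C (g i:ℚ) *
            monomial (Finsupp.equivFunOnFinite.symm g) 1 else 0) := by
          rw [Fin.sum_univ_succ, if_neg (by simp), zero_add]
          apply Finset.sum_congr rfl
          intro i _
          have hidx : ∀ h : ((Fin.succ i : Fin (e+1+2)) : ℕ) - 1 < e+2,
              (⟨((Fin.succ i : Fin (e+1+2)) : ℕ) - 1, h⟩ : Fin (e+2)) = i := by
            intro h
            apply Fin.ext
            simp
          rw [hidx]
          rcases Nat.lt_or_ge (i:ℕ) 1 with h | h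
          · rw [if_neg (by simp only [Fin.val_succ]; omega), if_neg (by omega)]
          · rw [if_pos (by simp [Fin.val_succ]; omega), if_pos h]
      _ = (∑ i : Fin (e+2), if 1 ≤ (i:ℕ) then C (g i:ℚ) else 0) *
            monomial (Finsupp.equivFunOnFinite.symm g) 1 := by
          rw [Finset.sum_mul]
          apply Finset.sum_congr rfl
          intro i _
          split
          · rfl
          · rw [zero_mul]
      _ = _ := by rw [hsum g]
  have hSq := hScol mm 0 (Or.inl rfl) (fun k hk => by
    rw [hM, dif_neg (by omega), if_pos (by simp), hq])
  have hSp := hScol nn 1 (Or.inr rfl) (fun k hk => by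
    rw [hM, dif_neg (by omega), if_neg (by simp), if_pos (by simp), hp])
  rw [lemL (e+1) M h1 h2, hM00, hM01, hM10, hM11, hSq, hSp]
  -- abbreviations
  set Q := monomial (Finsupp.equivFunOnFinite.symm mm) (1:ℚ) with hQ
  set P := monomial (Finsupp.equivFunOnFinite.symm nn) (1:ℚ) with hP
  have ht1 : (fun j : Fin (e+2) => nn j + mm j - if j = 0 then 1 else 0)
      = (fun j : Fin (e+2) => nn j + mm j - if (j:ℕ) = 0 then 1 else 0) := by
    funext j
    by_cases h : j = 0
    · simp [h]
    · rw [if_neg h, if_neg (by intro hc; exact h (Fin.ext (by rw [hc]; simp)))]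
  have ht2 : (fun j : Fin (e+2) => mm j + nn j - if j = 0 then 1 else 0)
      = (fun j : Fin (e+2) => nn j + mm j - if (j:ℕ) = 0 then 1 else 0) := by
    funext j
    by_cases h : j = 0
    · simp [h]
      omega
    · rw [if_neg h, if_neg (by intro hc; exact h (Fin.ext (by rw [hc]; simp)))]
      omega
  have K1 : Q * pderiv (0 : Fin (e+2)) P
      = C (nn 0 : ℚ) * monomial (Finsupp.equivFunOnFinite.symm
          (fun j : Fin (e+2) => nn j + mm j - if (j:ℕ) = 0 then 1 else 0)) 1 := by
    rw [hQ, hP, keyMulDeriv nn mm 0, ht1]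
  have K2 : P * pderiv (0 : Fin (e+2)) Q
      = C (mm 0 : ℚ) * monomial (Finsupp.equivFunOnFinite.symm
          (fun j : Fin (e+2) => nn j + mm j - if (j:ℕ) = 0 then 1 else 0)) 1 := by
    rw [hQ, hP, keyMulDeriv mm nn 0, ht2]
  rw [prodX (fun i : Fin (e+2) => nn i + mm i - if (i:ℕ) = 0 then 1 else 0)]
  simp only [Fin.mk_zero]
  have hc : (C ((((∑ i, (nn i : ℚ)) - 1) * ((mm 0 : ℕ) : ℚ)) -
        (((∑ i, (mm i : ℚ)) - 1) * ((nn 0 : ℕ) : ℚ))) : MvPolynomial (Fin (e+2)) ℚ)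
      = (1 - C ((∑ i, (mm i : ℚ)) - (mm 0 : ℚ))) * C (nn 0 : ℚ)
        - (1 - C ((∑ i, (nn i : ℚ)) - (nn 0 : ℚ))) * C (mm 0 : ℚ) := by
    rw [show (((∑ i, (nn i : ℚ)) - 1) * ((mm 0 : ℕ) : ℚ)) -
        (((∑ i, (mm i : ℚ)) - 1) * ((nn 0 : ℕ) : ℚ))
      = (1 - ((∑ i, (mm i : ℚ)) - (mm 0:ℚ))) * (nn 0 : ℚ)
        - (1 - ((∑ i, (nn i : ℚ)) - (nn 0:ℚ))) * (mm 0 : ℚ) from by ring]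
    simp [map_sub, _root_.map_mul, _root_.map_one]
  rw [hc]
  linear_combination (1 - C ((∑ i, (mm i : ℚ)) - (mm 0 : ℚ))) * K1
    - (1 - C ((∑ i, (nn i : ℚ)) - (nn 0 : ℚ))) * K2

/-- **main formula, order `k = 1`.** Let `d ≥ 2` and let
`W(p₀,…,p_d)` be the `(d+1)×(d+1)` determinant whose first row is `(p₀,…,p_d)` and
whose `(i+1)`-st row consists of the partial derivatives `∂/∂x^i`.  For monomials
`p = ∏(x^i)^{n_i}` and `q = ∏(x^i)^{m_i}`,
`W(q, p, x², …, x^d) = {(deg p − 1)m₁ − (deg q − 1)n₁} · pq/x¹`,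
as a polynomial identity (the coefficient vanishes whenever `m₁ = n₁ = 0`). -/
theorem stmt19 (d : ℕ) (hd : 2 ≤ d) (nn mm : Fin d → ℕ) :
    Matrix.det (Matrix.of fun i j : Fin (d + 1) =>
        (if hi : (i : ℕ) = 0 then id
         else ⇑(pderiv (⟨(i : ℕ) - 1, by have := i.isLt; omega⟩ : Fin d)))
        (if (j : ℕ) = 0 then ∏ i, X i ^ mm i
         else if (j : ℕ) = 1 then (∏ i, X i ^ nn i : MvPolynomial (Fin d) ℚ)
         else X (⟨(j : ℕ) - 1, by have := j.isLt; omega⟩ : Fin d)))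
      = C ((((∑ i, (nn i : ℚ)) - 1) * ((mm ⟨0, by omega⟩ : ℕ) : ℚ)) -
            (((∑ i, (mm i : ℚ)) - 1) * ((nn ⟨0, by omega⟩ : ℕ) : ℚ))) *
          ∏ i : Fin d, X i ^ (nn i + mm i - (if (i : ℕ) = 0 then 1 else 0)) := by
  obtain ⟨e, rfl⟩ : ∃ e, d = e + 2 := ⟨d - 2, by omega⟩
  exact stmt19aux e nn mm _ (fun i j => rfl)
end
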